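/- arXiv:1512.00495 — 9 statements merged into one kernel-verified Lean document; each statement's English description precedes it below -/
import Mathlib

section
/- Let k be a difference field and R a k-σ-algebra. If for all k-linearly independent f₁,…,fₙ ∈ R the elements σ(f₁),…,σ(fₙ) are k-linearly independent, then for every σ-reduced k-σ-algebra S (i.e. σ : S → S injective), the tensor product R ⊗_k S is σ-reduced, where σ acts by σ(r ⊗ s) = σ(r) ⊗ σ(s). -/
/-!
Expand an element of `R ⊗_k S` as `∑ bᵢ ⊗ cᵢ` over a `k`-basis `b` of `R`. Its image
`∑ σ(bᵢ) ⊗ σ(cᵢ)` vanishes only if every `σ(cᵢ)` does, because `σ ∘ b` is again linearly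
independent (linear independence is a condition on finite subfamilies) and `S` is flat over the
field `k`. Injectivity of `σ` on `S` then forces every `cᵢ = 0`.
-/

open TensorProduct

/-- The diagonal endomorphism `σ(a ⊗ b) = σ(a) ⊗ σ(b)` of `A ⊗_k B` is injective
(i.e. `A ⊗_k B` is σ-reduced): any ring endomorphism satisfying the defining rule
on pure tensors is injective. -/
def SigmaReducedTensor (k A B : Type) [CommRing k] [CommRing A] [CommRing B]
    [Algebra k A] [Algebra k B] (σA : A →+* A) (σB : B →+* B) : Prop :=
  ∀ τ : (A ⊗[k] B) →+* A ⊗[k] B,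
    (∀ (a : A) (b : B), τ (a ⊗ₜ[k] b) = σA a ⊗ₜ[k] σB b) → Function.Injective τ

/-- A `k`-σ-algebra `R` is σ-separable over `k` if `R ⊗_k K` is σ-reduced for
every difference field extension `K` of `k`. -/
def IsSigmaSeparable (k R : Type) [Field k] [CommRing R] [Algebra k R]
    (σk : k →+* k) (σR : R →+* R) : Prop :=
  ∀ (K : Type) [Field K] [Algebra k K], ∀ σK : K →+* K,
    (∀ x : k, σK (algebraMap k K x) = algebraMap k K (σk x)) →
    SigmaReducedTensor k K R σK σR

theorem LinearIndependent.map_of_forall_fin {R M N : Type*} [Semiring R] [AddCommMonoid M]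
    [Module R M] [AddCommMonoid N] [Module R N] {f : M → N}
    (hf : ∀ (n : ℕ) (v : Fin n → M), LinearIndependent R v → LinearIndependent R (f ∘ v))
    {ι : Type*} {v : ι → M} (hv : LinearIndependent R v) : LinearIndependent R (f ∘ v) := by
  rw [linearIndependent_iff_finset_linearIndependent]
  intro s
  have hs := hf _ _ ((hv.comp _ Subtype.val_injective).comp _ s.equivFin.symm.injective)
  exact (linearIndependent_equiv s.equivFin.symm).mp hs

theorem TensorProduct.finsupp_sum_tmul_eq_zero_of_linearIndependent {R M N ι : Type*}
    [CommRing R] [AddCommGroup M] [Module R M] [AddCommGroup N] [Module R N] [Module.Flat R N]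
    {v : ι → M} (hv : LinearIndependent R v) (c : ι →₀ N)
    (h : (c.sum fun i n ↦ v i ⊗ₜ[R] n) = 0) : c = 0 := by
  let W := Submodule.span R (Set.range v)
  refine TensorProduct.sum_tmul_basis_left_eq_zero (Module.Basis.span hv) c
    (Module.Flat.rTensor_preserves_injective_linearMap W.subtype Subtype.val_injective ?_)
  simpa [Finsupp.sum, map_sum] using h

theorem strongly_etale_stmt1_general
    (k R : Type) [Field k] [CommRing R] [Algebra k R]
    (σk : k →+* k) (σR : R →+* R)
    (hLI : ∀ (n : ℕ) (f : Fin n → R), LinearIndependent k f →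
      LinearIndependent k (fun i => σR (f i))) :
    ∀ (S : Type) [CommRing S] [Algebra k S], ∀ σS : S →+* S,
      (∀ x : k, σS (algebraMap k S x) = algebraMap k S (σk x)) →
      Function.Injective σS →
      SigmaReducedTensor k R S σR σS := by
  intro S _ _ σS _ hσS τ hτ
  rw [injective_iff_map_eq_zero]
  intro x hx
  let b := Module.Basis.ofVectorSpace k R
  obtain ⟨c, rfl⟩ := TensorProduct.eq_repr_basis_left b x
  have hσb : LinearIndependent k (σR ∘ b) :=
    LinearIndependent.map_of_forall_fin hLI b.linearIndependent
  have hτc : ((c.mapRange σS (map_zero σS)).sum fun i s ↦ σR (b i) ⊗ₜ[k] s) = 0 := by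
    rw [Finsupp.sum_mapRange_index (by simp)]
    simpa [Finsupp.sum, map_sum, hτ] using hx
  have hc : c = 0 := Finsupp.mapRange_injective σS (map_zero σS) hσS <| by
    simpa using TensorProduct.finsupp_sum_tmul_eq_zero_of_linearIndependent hσb _ hτc
  simp [hc]

/-- If `σ` preserves `k`-linear independence, then `R ⊗_k S` is σ-reduced for
every σ-reduced `k`-σ-algebra `S`. -/
theorem strongly_etale_stmt1
    (k R : Type) [Field k] [CommRing R] [Algebra k R]
    (σk : k →+* k) (σR : R →+* R)
    (hcomp : ∀ x : k, σR (algebraMap k R x) = algebraMap k R (σk x))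
    (hLI : ∀ (n : ℕ) (f : Fin n → R), LinearIndependent k f →
      LinearIndependent k (fun i => σR (f i))) :
    ∀ (S : Type) [CommRing S] [Algebra k S], ∀ σS : S →+* S,
      (∀ x : k, σS (algebraMap k S x) = algebraMap k S (σk x)) →
      Function.Injective σS →
      SigmaReducedTensor k R S σR σS :=
  strongly_etale_stmt1_general k R σk σR hLI
end

section
/- Let k be a difference field and K an inversive σ-field extension of k (σ : K → K is an automorphism). Let R be a k-σ-algebra such that R ⊗_k K is σ-reduced. Then for all k-linearly independent f₁,…,fₙ ∈ R, the elements σ(f₁),…,σ(fₙ) ∈ R are k-linearly independent over k. -/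
/-!
Extend the σ of `K` and of `R` to the endomorphism `σ(a ⊗ b) = σ(a) ⊗ σ(b)` of `K ⊗_k R`, which
is injective by hypothesis. Since `K` is flat over `k`, the `1 ⊗ fᵢ` are `K`-linearly
independent. Given a relation `∑ gᵢ σ(fᵢ) = 0` over `k`, inversivity of `K` gives `cᵢ ∈ K` with
`σ(cᵢ) = gᵢ`; then `σ(∑ cᵢ ⊗ fᵢ) = 1 ⊗ ∑ gᵢ σ(fᵢ) = 0`, so `∑ cᵢ ⊗ fᵢ = 0`, all `cᵢ` vanish,
and hence so do all `gᵢ`.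
-/

open TensorProduct

section

variable {k A B : Type*} [CommSemiring k] [Semiring A] [Algebra k A] [Semiring B] [Algebra k B]
  {σk : k →+* k}

def RingHom.toSemilinearMapOfComp (σA : A →+* A)
    (hA : ∀ x : k, σA (algebraMap k A x) = algebraMap k A (σk x)) : A →ₛₗ[σk] A where
  toFun := σA
  map_add' := map_add σA
  map_smul' c a := by simp [Algebra.smul_def, hA]

variable {σA : A →+* A} {σB : B →+* B}

def Algebra.TensorProduct.sigmaMap
    (hA : ∀ x : k, σA (algebraMap k A x) = algebraMap k A (σk x))
    (hB : ∀ x : k, σB (algebraMap k B x) = algebraMap k B (σk x)) :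
    A ⊗[k] B →+* A ⊗[k] B where
  __ := _root_.TensorProduct.map (RingHom.toSemilinearMapOfComp σA hA)
    (RingHom.toSemilinearMapOfComp σB hB)
  map_zero' := map_zero _
  map_one' := by simp [Algebra.TensorProduct.one_def, RingHom.toSemilinearMapOfComp]
  map_mul' x y := by
    induction x with
    | zero => simp
    | add x₁ x₂ h₁ h₂ => simp_all [add_mul]
    | tmul a b =>
      induction y with
      | zero => simp
      | add y₁ y₂ h₁ h₂ => simp_all [mul_add]
      | tmul c d => simp [RingHom.toSemilinearMapOfComp]

@[simp]
theorem Algebra.TensorProduct.sigmaMap_tmul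
    (hA : ∀ x : k, σA (algebraMap k A x) = algebraMap k A (σk x))
    (hB : ∀ x : k, σB (algebraMap k B x) = algebraMap k B (σk x)) (a : A) (b : B) :
    sigmaMap hA hB (a ⊗ₜ b) = σA a ⊗ₜ σB b :=
  rfl

end

theorem LinearIndependent.comp_of_injective_tensorMap {k K R ι : Type*} [Field k] [Ring K]
    [Nontrivial K] [Algebra k K] [Ring R] [Algebra k R] {σK : K →+* K} {σR : R →+* R}
    (τ : K ⊗[k] R →+ K ⊗[k] R) (hτ : ∀ (a : K) (b : R), τ (a ⊗ₜ b) = σK a ⊗ₜ σR b)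
    (hτ_inj : Function.Injective τ) (hσK : Function.Surjective σK) {f : ι → R}
    (hf : LinearIndependent k f) : LinearIndependent k (fun i ↦ σR (f i)) := by
  have hf_K := Module.Flat.linearIndependent_one_tmul (S := K) hf
  rw [linearIndependent_iff'] at hf_K ⊢
  intro s g hg i hi
  choose c hc using fun i ↦ hσK (algebraMap k K (g i))
  have hτc : τ (∑ i ∈ s, c i • (1 ⊗ₜ[k] f i)) = 0 := by
    calc τ (∑ i ∈ s, c i • (1 ⊗ₜ[k] f i))
        = ∑ i ∈ s, algebraMap k K (g i) ⊗ₜ[k] σR (f i) := by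
          simp [map_sum, TensorProduct.smul_tmul', hτ, hc]
      _ = 1 ⊗ₜ[k] ∑ i ∈ s, g i • σR (f i) := by
          simp [TensorProduct.tmul_sum, Algebra.algebraMap_eq_smul_one, TensorProduct.smul_tmul]
      _ = 0 := by rw [hg, TensorProduct.tmul_zero]
  have hc_zero := hf_K s c (hτ_inj (hτc.trans τ.map_zero.symm)) i hi
  apply FaithfulSMul.algebraMap_injective k K
  rw [← hc, hc_zero, map_zero, map_zero]

/-- If `K` is an inversive difference field extension of `k` and `R ⊗_k K` is
σ-reduced, then `σ` preserves `k`-linear independence in `R`. -/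
theorem strongly_etale_stmt2
    (k R K : Type) [Field k] [CommRing R] [Algebra k R] [Field K] [Algebra k K]
    (σk : k →+* k) (σR : R →+* R) (σK : K →+* K)
    (hcompR : ∀ x : k, σR (algebraMap k R x) = algebraMap k R (σk x))
    (hcompK : ∀ x : k, σK (algebraMap k K x) = algebraMap k K (σk x))
    (hinv : Function.Bijective σK)
    (hred : SigmaReducedTensor k K R σK σR) :
    ∀ (n : ℕ) (f : Fin n → R), LinearIndependent k f →
      LinearIndependent k (fun i => σR (f i)) := by
  intro n f hf
  let τ := Algebra.TensorProduct.sigmaMap hcompK hcompR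
  exact hf.comp_of_injective_tensorMap τ.toAddMonoidHom (fun _ _ ↦ rfl)
    (hred τ (Algebra.TensorProduct.sigmaMap_tmul hcompK hcompR)) hinv.surjective
end

section
/- Let k be a field of characteristic p > 0, q a power of p, and R a k-algebra. Regard k and R as difference rings via σ(x) = x^q. Then R is σ-separable over k (i.e. R ⊗_k K is σ-reduced for every σ-field extension K of k) if and only if R is a separable k-algebra (i.e. R ⊗_k K is reduced for every field extension K of k). -/
open TensorProduct

/-!
If `K ⊗ R` is σ-reduced for `K` with its `q`-power Frobenius, then `x ↦ x ^ q` is injective on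
`K ⊗ R`, which is therefore reduced.

Conversely, let `σ_K` be an endomorphism of `K` compatible with the Frobenius of `k`, and let `K'`
be `K` with its `k`-algebra structure twisted by that Frobenius. Both `σ_K ⊗ 1` and `Frob_K ⊗ 1`
are `k`-algebra maps `K ⊗ R → K' ⊗ R`, and `((σ_K ⊗ 1) z) ^ q = (Frob_K ⊗ 1) (σ z)`. So if
`σ z = 0`, then `(σ_K ⊗ 1) z` is nilpotent in the reduced ring `K' ⊗ R`, hence zero, and
`σ_K ⊗ 1` is injective because `R` is flat over the field `k`.
-/

section IterateFrobenius

variable (k A : Type*) [Field k] [CommRing A] [Algebra k A] (p : ℕ) [Fact p.Prime] [CharP k p]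

include k in
theorem add_pow_char_pow_of_algebra (m : ℕ) (x y : A) :
    (x + y) ^ p ^ m = x ^ p ^ m + y ^ p ^ m := by
  cases subsingleton_or_nontrivial A
  · exact Subsingleton.elim _ _
  · have : CharP A p := charP_of_injective_algebraMap' k p
    exact add_pow_char_pow x y p m

def iterateFrobeniusOfAlgebra (m : ℕ) : A →+* A where
  toFun x := x ^ p ^ m
  map_one' := one_pow _
  map_mul' x y := mul_pow x y _
  map_zero' := zero_pow (pow_ne_zero _ (Fact.out : p.Prime).ne_zero)
  map_add' := add_pow_char_pow_of_algebra k A p m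

variable {k A p} in
@[simp]
theorem iterateFrobeniusOfAlgebra_apply (m : ℕ) (x : A) :
    iterateFrobeniusOfAlgebra k A p m x = x ^ p ^ m :=
  rfl

end IterateFrobenius

/-- `K` with its `k`-algebra structure pulled back along `σ`; the parameter only selects the
`Algebra` instance. -/
def Twist {k : Type*} [CommSemiring k] (_σ : k →+* k) (K : Type*) : Type _ := K

namespace Twist

variable {k K : Type*} [CommSemiring k] [Field K] [Algebra k K] (σ : k →+* k)

instance : Field (Twist σ K) := inferInstanceAs (Field K)

instance : Algebra k (Twist σ K) := ((algebraMap k K).comp σ).toAlgebra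

def algHom (f : K →+* K) (hf : ∀ c, f (algebraMap k K c) = algebraMap k K (σ c)) :
    K →ₐ[k] Twist σ K :=
  { f with commutes' := hf }

end Twist

section

variable {k K R : Type} [Field k] [Field K] [CommRing R] [Algebra k K] [Algebra k R]
  {p : ℕ} [Fact p.Prime] [CharP k p] (m : ℕ) {σk : k →+* k} {σR : R →+* R}
  (hσk : ∀ x, σk x = x ^ p ^ m) (hσR : ∀ x, σR x = x ^ p ^ m)
include hσk hσR

theorem IsSigmaSeparable.isReduced_tensorProduct (hm : 0 < m)
    (h : IsSigmaSeparable k R σk σR) (K : Type) [Field K] [Algebra k K] :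
    IsReduced (K ⊗[k] R) := by
  have hinj := h K (iterateFrobeniusOfAlgebra k K p m) (by simp [hσk])
    (iterateFrobeniusOfAlgebra k (K ⊗[k] R) p m)
    (by simp [hσR, Algebra.TensorProduct.tmul_pow])
  have hq : 1 < p ^ m := Nat.one_lt_pow hm.ne' (Fact.out : p.Prime).one_lt
  refine (isReduced_iff_pow_one_lt _ hq).2 fun x hx => hinj ?_
  rw [map_zero]
  simpa using hx

theorem sigmaReducedTensor_of_isReduced_twist {σK : K →+* K}
    (hσK : ∀ x, σK (algebraMap k K x) = algebraMap k K (σk x))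
    [IsReduced (Twist σk K ⊗[k] R)] : SigmaReducedTensor k K R σK σR := by
  intro τ hτ
  let Φ := Algebra.TensorProduct.map (Twist.algHom σk σK hσK) (AlgHom.id k R)
  let F := Algebra.TensorProduct.map
    (Twist.algHom σk (iterateFrobeniusOfAlgebra k K p m) (by simp [hσk])) (AlgHom.id k R)
  have frobenius_map_eq : ∀ z, iterateFrobeniusOfAlgebra k _ p m (Φ z) = F (τ z) := by
    intro z
    induction z using TensorProduct.induction_on with
    | zero => simp only [map_zero]
    | tmul a b =>
      simp only [Φ, F, hτ, hσR, Algebra.TensorProduct.map_tmul, AlgHom.id_apply,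
        iterateFrobeniusOfAlgebra_apply]
      exact Algebra.TensorProduct.tmul_pow _ _ _
    | add x y hx hy => simp only [map_add, hx, hy]
  have hΦ : Function.Injective Φ :=
    Module.Flat.rTensor_preserves_injective_linearMap (M := R)
      (Twist.algHom σk σK hσK).toLinearMap σK.injective
  refine (injective_iff_map_eq_zero τ).2 fun z hz => hΦ ?_
  rw [map_zero]
  refine IsReduced.eq_zero _ ⟨p ^ m, ?_⟩
  rw [← iterateFrobeniusOfAlgebra_apply (k := k), frobenius_map_eq, hz, map_zero]

end

/-- For `k` of characteristic `p > 0`, `q` a power of `p`, and σ the `q`-power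
Frobenius, a `k`-algebra `R` is σ-separable over `k` iff it is a separable
`k`-algebra (i.e. `R ⊗_k K` is reduced for every field extension `K|k`). -/
theorem strongly_etale_stmt3
    (k R : Type) [Field k] [CommRing R] [Algebra k R]
    (p q : ℕ) (hp : p.Prime) [CharP k p]
    (hq : ∃ m : ℕ, 0 < m ∧ q = p ^ m)
    (σk : k →+* k) (σR : R →+* R)
    (hσk : ∀ x : k, σk x = x ^ q)
    (hσR : ∀ x : R, σR x = x ^ q) :
    IsSigmaSeparable k R σk σR ↔
      (∀ (K : Type) [Field K] [Algebra k K], IsReduced (K ⊗[k] R)) := by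
  obtain ⟨m, hm, rfl⟩ := hq
  have : Fact p.Prime := ⟨hp⟩
  constructor
  · exact fun h K _ _ => h.isReduced_tensorProduct m hσk hσR hm K
  · intro h K _ _ σK hσK
    have := h (Twist σk K)
    exact sigmaReducedTensor_of_isReduced_twist m hσk hσR hσK
end

section
/- Let k be a difference field, R a k-σ-algebra, and K a difference field extension of k. Then R is σ-separable over k if and only if R ⊗_k K is σ-separable over K. -/
open TensorProduct

/-!
Both sides are equivalent to one condition of linear algebra. For a `k`-basis `b` of `R`,
`R` is σ-separable over `k` iff the family `σ ∘ b` is `k`-linearly independent. If it is, the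
diagonal endomorphism of `L ⊗_k R` sends `∑ lᵢ ⊗ bᵢ` to `∑ σ(lᵢ) ⊗ σ(bᵢ)`, which vanishes only
when all `lᵢ` do. Conversely, over an inversive extension `L` of `k` a relation
`∑ wᵢ σ(bᵢ) = 0` with `wᵢ ∈ k` lifts to `∑ σ⁻¹(wᵢ) ⊗ bᵢ`, a nonzero element of the kernel.
For `K ⊗_k R` with its `K`-basis `1 ⊗ b` the condition reads: the `1 ⊗ σ(bᵢ)` are
`K`-linearly independent, which by flatness of `K` over `k` is the same condition as for `R`.
-/

universe u

/- The extension is the direct limit of `K →σ K →σ K → ⋯`: `σ` acts on every copy, and the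
element `x` of the `i`-th copy is `σ` of the element `x` of the `(i+1)`-st copy. -/
theorem exists_inversive_extension (K : Type u) [Field K] (σ : K →+* K) :
    ∃ (M : Type u) (_ : Field M) (_ : Algebra K M) (σM : M →+* M),
      (∀ x, σM (algebraMap K M x) = algebraMap K M (σ x)) ∧ Function.Surjective σM := by
  let f : ∀ i j : ℕ, i ≤ j → K →+* K := fun i j _ => σ ^ (j - i)
  have : DirectedSystem (fun _ : ℕ => K) (fun i j h => f i j h) :=
    ⟨fun i x => by simp [f], fun {l j i} hij hjl x => by
      simp only [f, RingHom.coe_pow, ← Function.iterate_add_apply,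
        Nat.sub_add_sub_cancel hjl hij]⟩
  let of : ∀ i, K →+* Ring.DirectLimit (fun _ : ℕ => K) (fun i j h => f i j h) :=
    Ring.DirectLimit.of _ _
  let _ : Field (Ring.DirectLimit (fun _ : ℕ => K) (fun i j h => f i j h)) :=
    Field.DirectLimit.field _ f
  let _ : Algebra K _ := (of 0).toAlgebra
  have hcompat : ∀ i j (hij : i ≤ j) (x : K), of j (σ (f i j hij x)) = of i (σ x) := by
    intro i j hij x
    have hcomm : σ (f i j hij x) = f i j hij (σ x) := by
      simp only [f, RingHom.coe_pow, ← Function.iterate_succ_apply' σ,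
        Function.iterate_succ_apply]
    rw [hcomm]
    exact Ring.DirectLimit.of_f (G := fun _ => K) (f := fun i j h => f i j h) hij (σ x)
  let σM := Ring.DirectLimit.lift _ _ _ (fun i => (of i).comp σ) hcompat
  have hσM : ∀ i x, σM (of i x) = of i (σ x) :=
    fun i x => Ring.DirectLimit.lift_of (G := fun _ => K) _ _ _ i x
  refine ⟨_, inferInstance, inferInstance, σM, hσM 0, fun z => ?_⟩
  obtain ⟨i, x, rfl⟩ := Ring.DirectLimit.exists_of z
  refine ⟨of (i + 1) x, ?_⟩
  have hstep : f i (i + 1) i.le_succ x = σ x := by simp [f]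
  rw [hσM, ← hstep]
  exact Ring.DirectLimit.of_f (G := fun _ => K) (f := fun i j h => f i j h) i.le_succ x

theorem linearIndependent_one_tmul_iff {k K M ι : Type*} [Field k] [CommRing K] [Nontrivial K]
    [Algebra k K] [AddCommGroup M] [Module k M] {v : ι → M} :
    LinearIndependent K (fun i => (1 : K) ⊗ₜ[k] v i) ↔ LinearIndependent k v :=
  ⟨fun h => .of_comp (TensorProduct.mk k K M 1) (h.restrict_scalars' k),
    Module.Flat.linearIndependent_one_tmul⟩

theorem linearCombination_one_tmul_mapRange_algebraMap {k L M ι : Type*} [CommSemiring k]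
    [Semiring L] [Algebra k L] [AddCommMonoid M] [Module k M] (v : ι → M) (w : ι →₀ k) :
    Finsupp.linearCombination L (fun i => (1 : L) ⊗ₜ[k] v i)
        (w.mapRange (algebraMap k L) (map_zero _)) =
      (1 : L) ⊗ₜ[k] Finsupp.linearCombination k v w := by
  rw [Finsupp.linearCombination_apply,
    Finsupp.sum_mapRange_index fun i => zero_smul L ((1 : L) ⊗ₜ[k] v i),
    Finsupp.linearCombination_apply, Finsupp.sum, Finsupp.sum, tmul_sum]
  simp [algebraMap_smul, tmul_smul]

theorem map_linearCombination_one_tmul {k L R ι : Type*} [CommSemiring k] [CommSemiring L]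
    [Semiring R] [Algebra k L] [Algebra k R] {σL : L →+* L} {σR : R →+* R}
    {τ : L ⊗[k] R →+* L ⊗[k] R} (hτ : ∀ l r, τ (l ⊗ₜ r) = σL l ⊗ₜ σR r) (b : ι → R)
    (c : ι →₀ L) :
    τ (Finsupp.linearCombination L (fun i => (1 : L) ⊗ₜ[k] b i) c) =
      Finsupp.linearCombination L (fun i => (1 : L) ⊗ₜ[k] σR (b i))
        (c.mapRange σL σL.map_zero) := by
  simp [Finsupp.linearCombination_apply, Finsupp.sum_mapRange_index, map_finsuppSum,
    smul_tmul', hτ]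

theorem IsSigmaSeparable.linearIndependent_comp {k R : Type} {ι : Type*} [Field k] [CommRing R]
    [Algebra k R] {σk : k →+* k} {σR : R →+* R}
    (hcomp : ∀ x : k, σR (algebraMap k R x) = algebraMap k R (σk x))
    (hsep : IsSigmaSeparable k R σk σR) {b : ι → R} (hb : LinearIndependent k b) :
    LinearIndependent k (σR ∘ b) := by
  obtain ⟨L, _, _, σL, hcompL, hsurj⟩ := exists_inversive_extension k σk
  obtain ⟨τ, hτ⟩ : ∃ τ : L ⊗[k] R →+* L ⊗[k] R, ∀ l r, τ (l ⊗ₜ r) = σL l ⊗ₜ σR r :=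
    ⟨_, Algebra.TensorProduct.mapRingHom_tmul σk σL σR (RingHom.ext hcompL) (RingHom.ext hcomp)⟩
  have hinj : Function.Injective τ := hsep L σL hcompL τ hτ
  have hbL : LinearIndependent L fun i => (1 : L) ⊗ₜ[k] b i := linearIndependent_one_tmul_iff.mpr hb
  rw [linearIndependent_iff]
  intro w hw
  obtain ⟨c, hc⟩ := Finsupp.mapRange_surjective σL σL.map_zero hsurj
    (w.mapRange (algebraMap k L) (map_zero _))
  have hτc : τ (Finsupp.linearCombination L (fun i => (1 : L) ⊗ₜ[k] b i) c) = τ 0 := by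
    rw [map_linearCombination_one_tmul hτ, hc, linearCombination_one_tmul_mapRange_algebraMap,
      ← Function.comp_def, hw, tmul_zero, map_zero]
  have hc0 : c = 0 := linearIndependent_iff.mp hbL c (hinj hτc)
  apply Finsupp.mapRange_injective _ (map_zero (algebraMap k L)) (algebraMap k L).injective
  rw [← hc, hc0, Finsupp.mapRange_zero, Finsupp.mapRange_zero]

theorem isSigmaSeparable_of_linearIndependent_comp {k R : Type} {ι : Type*} [Field k]
    [CommRing R] [Algebra k R] {σk : k →+* k} {σR : R →+* R} (b : Module.Basis ι k R)
    (h : LinearIndependent k (σR ∘ b)) : IsSigmaSeparable k R σk σR := by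
  intro L _ _ σL _ τ hτ
  let bL := Algebra.TensorProduct.basis L b
  have hbL : ⇑bL = fun i => (1 : L) ⊗ₜ[k] b i := funext (Algebra.TensorProduct.basis_apply b)
  refine Function.Injective.of_comp_right (g := Finsupp.linearCombination L bL) ?_
    fun x => ⟨bL.repr x, bL.linearCombination_repr x⟩
  intro c c' hcc'
  simp only [Function.comp_apply, hbL, map_linearCombination_one_tmul hτ] at hcc'
  exact Finsupp.mapRange_injective _ _ σL.injective (linearIndependent_one_tmul_iff.mpr h hcc')

theorem isSigmaSeparable_iff_linearIndependent_comp {k R : Type} {ι : Type*} [Field k]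
    [CommRing R] [Algebra k R] {σk : k →+* k} {σR : R →+* R}
    (hcomp : ∀ x : k, σR (algebraMap k R x) = algebraMap k R (σk x)) (b : Module.Basis ι k R) :
    IsSigmaSeparable k R σk σR ↔ LinearIndependent k (σR ∘ b) :=
  ⟨fun hsep => hsep.linearIndependent_comp hcomp b.linearIndependent,
    isSigmaSeparable_of_linearIndependent_comp b⟩

theorem strongly_etale_stmt5_general
    (k R K : Type) [Field k] [CommRing R] [Algebra k R] [Field K] [Algebra k K]
    (σk : k →+* k) (σR : R →+* R) (σK : K →+* K)
    (hcompR : ∀ x : k, σR (algebraMap k R x) = algebraMap k R (σk x))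
    (σT : (K ⊗[k] R) →+* K ⊗[k] R)
    (hσT : ∀ (a : K) (r : R), σT (a ⊗ₜ[k] r) = σK a ⊗ₜ[k] σR r) :
    IsSigmaSeparable k R σk σR ↔ IsSigmaSeparable K (K ⊗[k] R) σK σT := by
  let b := Module.Basis.ofVectorSpace k R
  have hcompT : ∀ c : K, σT (algebraMap K (K ⊗[k] R) c) = algebraMap K (K ⊗[k] R) (σK c) :=
    fun c => by simp [Algebra.TensorProduct.algebraMap_apply, hσT]
  have hσTb : σT ∘ Algebra.TensorProduct.basis K b = fun i => (1 : K) ⊗ₜ[k] (σR ∘ b) i :=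
    funext fun i => by simp [Algebra.TensorProduct.basis_apply, hσT]
  rw [isSigmaSeparable_iff_linearIndependent_comp hcompR b,
    isSigmaSeparable_iff_linearIndependent_comp hcompT (Algebra.TensorProduct.basis K b), hσTb,
    linearIndependent_one_tmul_iff]

/-- `R` is σ-separable over `k` if and only if `R ⊗_k K` is σ-separable over `K`,
for any difference field extension `K|k`. Here `σ_T` is the diagonal endomorphism
of `K ⊗_k R`. -/
theorem strongly_etale_stmt5
    (k R K : Type) [Field k] [CommRing R] [Algebra k R] [Field K] [Algebra k K]
    (σk : k →+* k) (σR : R →+* R) (σK : K →+* K)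
    (hcompR : ∀ x : k, σR (algebraMap k R x) = algebraMap k R (σk x))
    (hcompK : ∀ x : k, σK (algebraMap k K x) = algebraMap k K (σk x))
    (σT : (K ⊗[k] R) →+* K ⊗[k] R)
    (hσT : ∀ (a : K) (r : R), σT (a ⊗ₜ[k] r) = σK a ⊗ₜ[k] σR r) :
    IsSigmaSeparable k R σk σR ↔ IsSigmaSeparable K (K ⊗[k] R) σK σT :=
  strongly_etale_stmt5_general k R K σk σR σK hcompR σT hσT
end

section
/- Let k be a difference field and R a strongly σ-étale k-σ-algebra, i.e. R is étale (finite-dimensional with R ⊗_k k̄ isomorphic to a finite product of copies of k̄) as a k-algebra and σ-separable over k. Then σ induces a bijection on the set of primitive idempotents of R, and every idempotent element of R is periodic, i.e. σⁿ(e) = e for some n ≥ 1. -/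
/-!
Taking `K = k` in σ-separability shows that σ is injective. Étaleness embeds `R` into
`k̄ⁿ`, whose idempotents are the 0/1-vectors, so `R` has only finitely many idempotents.
An injective self-map of a finite set is a permutation, so σ permutes the idempotents and
each of them is periodic; since σ then preserves and reflects orthogonal decompositions,
it permutes the primitive ones.
-/

open TensorProduct

/-- A `k`-algebra is étale if its base change to the algebraic closure of `k`
is a finite product of copies of the algebraic closure. -/
def IsEtaleAlgebra (k R : Type) [Field k] [CommRing R] [Algebra k R] : Prop :=
  ∃ n : ℕ, Nonempty ((AlgebraicClosure k ⊗[k] R) ≃ₐ[AlgebraicClosure k]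
    (Fin n → AlgebraicClosure k))

/-- A primitive idempotent: a nonzero idempotent that is not the sum of two
nonzero orthogonal idempotents. -/
def IsPrimitiveIdempotent {R : Type} [CommRing R] (e : R) : Prop :=
  e ≠ 0 ∧ IsIdempotentElem e ∧
    ∀ a b : R, IsIdempotentElem a → IsIdempotentElem b → a * b = 0 → a + b = e →
      a = 0 ∨ b = 0

theorem Set.Finite.mem_periodicPts_of_mapsTo {α : Type*} {f : α → α} {s : Set α}
    (hs : s.Finite) (hmaps : Set.MapsTo f s s) (hinj : Set.InjOn f s) {x : α} (hx : x ∈ s) :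
    x ∈ Function.periodicPts f := by
  have := hs.to_subtype
  obtain ⟨n, hn, hper⟩ := (hmaps.restrict_inj.mpr hinj).mem_periodicPts ⟨x, hx⟩
  refine ⟨n, hn, ?_⟩
  simpa [Function.IsPeriodicPt, Function.IsFixedPt, Subtype.ext_iff,
    hmaps.coe_iterate_restrict] using hper

theorem finite_setOf_isIdempotentElem_pi (ι K : Type*) [Finite ι] [MonoidWithZero K]
    [IsLeftCancelMulZero K] : {e : ι → K | IsIdempotentElem e}.Finite := by
  refine (Set.Finite.pi (t := fun _ => ({0, 1} : Set K)) fun _ => Set.toFinite _).subset ?_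
  intro e he i _
  exact IsIdempotentElem.iff_eq_zero_or_one.mp (he.map (Pi.evalMonoidHom _ i))

theorem finite_setOf_isIdempotentElem_of_injective {R S F : Type*} [Mul R] [Mul S]
    [FunLike F R S] [MulHomClass F R S] (f : F) (hf : Function.Injective f)
    (h : {e : S | IsIdempotentElem e}.Finite) : {e : R | IsIdempotentElem e}.Finite :=
  (h.preimage hf.injOn).subset fun _ he => he.map f

theorem IsEtaleAlgebra.finite_setOf_isIdempotentElem {k R : Type} [Field k] [CommRing R]
    [Algebra k R] (h : IsEtaleAlgebra k R) : {e : R | IsIdempotentElem e}.Finite := by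
  obtain ⟨n, ⟨φ⟩⟩ := h
  have hincl := Algebra.TensorProduct.includeRight_injective (A := AlgebraicClosure k) (B := R)
    (algebraMap k _).injective
  exact finite_setOf_isIdempotentElem_of_injective
    (φ.toRingHom.comp Algebra.TensorProduct.includeRight.toRingHom)
    (φ.injective.comp hincl) (finite_setOf_isIdempotentElem_pi _ _)

theorem IsSigmaSeparable.injective {k R : Type} [Field k] [CommRing R] [Algebra k R]
    {σk : k →+* k} {σR : R →+* R}
    (hcomp : ∀ x : k, σR (algebraMap k R x) = algebraMap k R (σk x))
    (hsep : IsSigmaSeparable k R σk σR) : Function.Injective σR := by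
  let e : k ⊗[k] R ≃+* R := (Algebra.TensorProduct.lid k R).toRingEquiv
  let τ : k ⊗[k] R →+* k ⊗[k] R := e.symm.toRingHom.comp (σR.comp e.toRingHom)
  have hτ : ∀ (a : k) (b : R), τ (a ⊗ₜ b) = σk a ⊗ₜ σR b := by
    intro a b
    refine e.symm_apply_eq.mpr ?_
    simp [e, Algebra.smul_def, hcomp]
  intro x y hxy
  apply e.symm.injective
  apply hsep k σk (fun _ => rfl) τ hτ
  simp [τ, hxy]

section IdempotentDynamics

variable {R : Type} [CommRing R] {σ : R →+* R}

theorem bijOn_setOf_isIdempotentElem (hσ : Function.Injective σ)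
    (hfin : {e : R | IsIdempotentElem e}.Finite) :
    Set.BijOn σ {e | IsIdempotentElem e} {e | IsIdempotentElem e} :=
  (hfin.injOn_iff_bijOn_of_mapsTo fun _ he => he.map σ).mp hσ.injOn

theorem isPrimitiveIdempotent_map_iff (hσ : Function.Injective σ)
    (hsurj : Set.SurjOn σ {e | IsIdempotentElem e} {e | IsIdempotentElem e}) {e : R} :
    IsPrimitiveIdempotent (σ e) ↔ IsPrimitiveIdempotent e := by
  have map_eq_zero {x : R} : σ x = 0 ↔ x = 0 := map_eq_zero_iff σ hσ
  constructor
  · rintro ⟨hne, hidem, hprim⟩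
    refine ⟨fun h => hne (map_eq_zero.mpr h), hσ (by rw [map_mul, hidem.eq]), ?_⟩
    intro a b ha hb hab habe
    simpa only [map_eq_zero] using hprim (σ a) (σ b) (ha.map σ) (hb.map σ)
      (by rw [← map_mul, hab, map_zero]) (by rw [← map_add, habe])
  · rintro ⟨hne, hidem, hprim⟩
    refine ⟨fun h => hne (map_eq_zero.mp h), hidem.map σ, ?_⟩
    intro a b ha hb hab habe
    obtain ⟨a, ha', rfl⟩ := hsurj ha
    obtain ⟨b, hb', rfl⟩ := hsurj hb
    simpa only [map_eq_zero] using hprim a b ha' hb'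
      (hσ (by rw [map_mul, hab, map_zero])) (hσ (by rw [map_add, habe]))

theorem bijOn_setOf_isPrimitiveIdempotent (hσ : Function.Injective σ)
    (hfin : {e : R | IsIdempotentElem e}.Finite) :
    Set.BijOn σ {e | IsPrimitiveIdempotent e} {e | IsPrimitiveIdempotent e} := by
  have hsurj := (bijOn_setOf_isIdempotentElem hσ hfin).surjOn
  refine ⟨fun e he => (isPrimitiveIdempotent_map_iff hσ hsurj).mpr he, hσ.injOn, ?_⟩
  intro f hf
  obtain ⟨e, -, rfl⟩ := hsurj hf.2.1
  exact ⟨e, (isPrimitiveIdempotent_map_iff hσ hsurj).mp hf, rfl⟩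

end IdempotentDynamics

/-- In a strongly σ-étale `k`-σ-algebra, σ induces a bijection on the set of
primitive idempotents, and every idempotent is periodic. -/
theorem strongly_etale_stmt7
    (k R : Type) [Field k] [CommRing R] [Algebra k R]
    (σk : k →+* k) (σR : R →+* R)
    (hcomp : ∀ x : k, σR (algebraMap k R x) = algebraMap k R (σk x))
    (hetale : IsEtaleAlgebra k R)
    (hsep : IsSigmaSeparable k R σk σR) :
    Set.BijOn σR {e : R | IsPrimitiveIdempotent e} {e : R | IsPrimitiveIdempotent e} ∧
      ∀ e : R, IsIdempotentElem e → ∃ n : ℕ, 0 < n ∧ σR^[n] e = e := by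
  have hinj := hsep.injective hcomp
  have hfin := hetale.finite_setOf_isIdempotentElem
  refine ⟨bijOn_setOf_isPrimitiveIdempotent hinj hfin, fun e he => ?_⟩
  exact hfin.mem_periodicPts_of_mapsTo (fun _ h => h.map σR) hinj.injOn he
end

section
/- Let k be a difference field and R a k-σ-algebra that is σ-generated by finitely many periodic idempotent elements (i.e. R is generated as a k-algebra by {σⁱ(e_j) : i ∈ ℕ, j} for finitely many idempotents e_j with σ^{n_j}(e_j) = e_j). Then R is strongly σ-étale over k: R is étale as a k-algebra and σ-separable over k. -/
/-!
The σ-orbit `T` of the generators is finite, consists of idempotents, and σ permutes it. The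
Boolean atoms `∏_{t ∈ T} (t or 1 - t)` form a complete family of orthogonal idempotents that
spans `R`, so the nonzero atoms are a `k`-basis of orthogonal idempotents, which splits
`K ⊗ R ≅ K^n` for every `K`. Since σ permutes the atoms and is periodic on them, it sends nonzero
atoms to nonzero atoms; hence the diagonal endomorphism of `K ⊗ R` maps this basis injectively
into itself, with injective coefficient map `σ_K`, and is therefore injective.
-/

open TensorProduct

open Function Set

section PeriodicOrbits

variable {α : Type*} {f : α → α}

def forwardOrbit (f : α → α) (s : Set α) : Set α := {x | ∃ e ∈ s, ∃ i, f^[i] e = x}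

theorem Function.IsPeriodicPt.finite_range_iterate {n : ℕ} {x : α} (hn : 0 < n)
    (hx : IsPeriodicPt f n x) : (range fun m => f^[m] x).Finite :=
  ((finite_Iio n).image fun m => f^[m] x).subset <| by
    rintro _ ⟨m, rfl⟩
    exact ⟨m % n, Nat.mod_lt m hn, hx.iterate_mod_apply m⟩

theorem finite_forwardOrbit {s : Set α} (hs : s.Finite) (hper : s ⊆ periodicPts f) :
    (forwardOrbit f s).Finite := by
  refine (hs.biUnion fun e he => ?_).subset fun x ⟨e, he, i, hx⟩ =>
    mem_biUnion (t := fun e => range fun m => f^[m] e) he ⟨i, hx⟩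
  obtain ⟨n, hn, he⟩ := hper he
  exact he.finite_range_iterate hn

theorem forwardOrbit_subset_periodicPts {s : Set α} (hper : s ⊆ periodicPts f) :
    forwardOrbit f s ⊆ periodicPts f := by
  rintro _ ⟨e, he, i, rfl⟩
  obtain ⟨n, hn, he⟩ := hper he
  exact mk_mem_periodicPts hn (he.apply_iterate i)

theorem mapsTo_forwardOrbit (s : Set α) : MapsTo f (forwardOrbit f s) (forwardOrbit f s) := by
  rintro _ ⟨e, he, i, rfl⟩
  exact ⟨e, he, i + 1, iterate_succ_apply' f i e⟩

theorem bijOn_forwardOrbit {s : Set α} (hs : s.Finite) (hper : s ⊆ periodicPts f) :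
    BijOn f (forwardOrbit f s) (forwardOrbit f s) :=
  ((finite_forwardOrbit hs hper).injOn_iff_bijOn_of_mapsTo (mapsTo_forwardOrbit s)).1 <|
    (bijOn_periodicPts (f := f)).injOn.mono (forwardOrbit_subset_periodicPts hper)

end PeriodicOrbits

theorem CompleteOrthogonalIdempotents.adjoin_le_span {k R κ : Type*} [CommSemiring k]
    [Semiring R] [Algebra k R] [Fintype κ] {f : κ → R} (hf : CompleteOrthogonalIdempotents f)
    {s : Set R} (hs : s ⊆ Submodule.span k (range f)) :
    Subalgebra.toSubmodule (Algebra.adjoin k s) ≤ Submodule.span k (range f) := by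
  classical
  have hmul : Submodule.span k (range f) * Submodule.span k (range f) ≤
      Submodule.span k (range f) := by
    rw [Submodule.span_mul_span]
    refine Submodule.span_le.2 ?_
    rintro _ ⟨_, ⟨i, rfl⟩, _, ⟨j, rfl⟩, rfl⟩
    change f i * f j ∈ _
    rw [hf.mul_eq i j]
    split_ifs
    exacts [Submodule.subset_span ⟨i, rfl⟩, zero_mem _]
  have hone : (1 : R) ∈ Submodule.span k (range f) :=
    hf.complete ▸ Submodule.sum_mem _ fun i _ => Submodule.subset_span ⟨i, rfl⟩
  exact Algebra.adjoin_le (S := (Submodule.span k (range f)).toSubalgebra hone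
    fun _ _ hx hy => hmul (Submodule.mul_mem_mul hx hy)) hs

section Atoms

variable {R : Type*} [CommRing R] {ι : Type*} [Fintype ι] [DecidableEq ι]

def idempotentAtom (e : ι → R) (F : Finset ι) : R := ∏ i, if i ∈ F then e i else 1 - e i

variable {e : ι → R}

theorem map_idempotentAtom {S : Type*} [CommRing S] (f : R →+* S) (F : Finset ι) :
    f (idempotentAtom e F) = idempotentAtom (f ∘ e) F := by
  simp [idempotentAtom, map_prod, apply_ite f]

theorem idempotentAtom_comp_equiv (p : ι ≃ ι) (F : Finset ι) :
    idempotentAtom (e ∘ p) F = idempotentAtom e (p.finsetCongr F) := by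
  refine Fintype.prod_equiv p _ _ fun i => ?_
  simp [Equiv.finsetCongr_apply]

theorem Function.Semiconj.idempotentAtom {σ : R →+* R} {p : ι ≃ ι} (h : Semiconj e p σ) :
    Semiconj (idempotentAtom e) p.finsetCongr σ := fun F => by
  rw [map_idempotentAtom, ← idempotentAtom_comp_equiv]
  congr
  exact funext h

theorem completeOrthogonalIdempotents_idempotentAtom (he : ∀ i, IsIdempotentElem (e i)) :
    CompleteOrthogonalIdempotents (idempotentAtom e) := by
  refine CompleteOrthogonalIdempotents.iff_ortho_complete.2 ⟨fun F G hFG => ?_, ?_⟩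
  · obtain ⟨i, hi⟩ : ∃ i, ¬(i ∈ F ↔ i ∈ G) := by simpa [Finset.ext_iff] using hFG
    rw [idempotentAtom, idempotentAtom, ← Finset.prod_mul_distrib]
    refine Finset.prod_eq_zero (Finset.mem_univ i) ?_
    by_cases hF : i ∈ F <;> by_cases hG : i ∈ G <;>
      simp_all [(he i).mul_one_sub_self, (he i).one_sub_mul_self]
  · have h : ∏ i, (e i + (1 - e i)) = 1 := by simp
    rw [Fintype.prod_add] at h
    refine Eq.trans (Finset.sum_congr rfl fun F _ => ?_) h
    rw [idempotentAtom, Finset.prod_ite, Finset.filter_mem_eq_inter, Finset.univ_inter,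
      Finset.filter_not, Finset.filter_mem_eq_inter, Finset.univ_inter, Finset.compl_eq_univ_sdiff]

theorem mul_idempotentAtom (he : ∀ i, IsIdempotentElem (e i)) (i : ι) (F : Finset ι) :
    e i * idempotentAtom e F = if i ∈ F then idempotentAtom e F else 0 := by
  rw [idempotentAtom, ← Finset.mul_prod_erase _ _ (Finset.mem_univ i), ← mul_assoc]
  by_cases hi : i ∈ F <;> simp [hi, (he i).eq, (he i).mul_one_sub_self]

theorem span_idempotentAtom_eq_top {k : Type*} [CommSemiring k] [Algebra k R]
    (he : ∀ i, IsIdempotentElem (e i)) (hgen : Algebra.adjoin k (range e) = ⊤) :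
    Submodule.span k (range (idempotentAtom e)) = ⊤ := by
  have hc := completeOrthogonalIdempotents_idempotentAtom he
  refine eq_top_iff.2 ?_
  calc ⊤ = Subalgebra.toSubmodule (Algebra.adjoin k (range e)) := by
        rw [hgen, Algebra.top_toSubmodule]
    _ ≤ _ := hc.adjoin_le_span ?_
  rintro _ ⟨i, rfl⟩
  rw [← mul_one (e i), ← hc.complete, Finset.mul_sum]
  refine Submodule.sum_mem _ fun F _ => ?_
  rw [mul_idempotentAtom he]
  split_ifs
  exacts [Submodule.subset_span ⟨F, rfl⟩, zero_mem _]

end Atoms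

theorem Function.Semiconj.apply_ne_zero {M κ : Type*} [Zero M] [Finite κ] {f : κ → M}
    {q : Equiv.Perm κ} {σ : M → M} (h : Semiconj f q σ) (hσ : σ 0 = 0) {i : κ} (hi : f i ≠ 0) :
    f (q i) ≠ 0 := by
  intro h0
  obtain ⟨n, hn, hq⟩ := (isOfFinOrder_of_finite q).exists_pow_eq_one
  apply hi
  calc f i = f (q^[n] i) := by rw [← Equiv.Perm.coe_pow, hq, Equiv.Perm.coe_one, id]
    _ = f (q^[n - 1] (q i)) := by
      rw [← iterate_succ_apply, Nat.succ_eq_add_one, Nat.sub_add_cancel hn]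
    _ = σ^[n - 1] (f (q i)) := h.iterate_right (n - 1) (q i)
    _ = 0 := by rw [h0, iterate_fixed hσ]

theorem Submodule.span_range_subtype_ne_zero {k M κ : Type*} [Semiring k] [AddCommMonoid M]
    [Module k M] (f : κ → M) :
    span k (range fun i : {i // f i ≠ 0} => f i) = span k (range f) := by
  refine le_antisymm (span_mono fun _ ⟨i, hi⟩ => ⟨i, hi⟩) (span_le.2 ?_)
  rintro _ ⟨i, rfl⟩
  by_cases hi : f i = 0
  · rw [SetLike.mem_coe, hi]
    exact zero_mem _
  · exact subset_span ⟨⟨i, hi⟩, rfl⟩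

section Basis

variable {k R : Type*} [Field k] [CommRing R] [Algebra k R] {κ : Type*} {f : κ → R}

theorem OrthogonalIdempotents.linearIndependent_ne_zero (hf : OrthogonalIdempotents f) :
    LinearIndependent k fun i : {i // f i ≠ 0} => f i := by
  refine linearIndependent_iff'.2 fun s g hs i hi => ?_
  have hsi := congr_arg (· * f i) hs
  simp only [Finset.sum_mul, smul_mul_assoc, zero_mul] at hsi
  rw [Finset.sum_eq_single_of_mem i hi fun j _ hji => by
    rw [hf.ortho (Subtype.coe_injective.ne hji), smul_zero], (hf.idem i).eq] at hsi
  exact (smul_eq_zero.1 hsi).resolve_right i.2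

noncomputable def OrthogonalIdempotents.basis (hf : OrthogonalIdempotents f)
    (hspan : Submodule.span k (range f) = ⊤) : Module.Basis {i // f i ≠ 0} k R :=
  .mk hf.linearIndependent_ne_zero (by rw [Submodule.span_range_subtype_ne_zero, hspan])

@[simp]
theorem OrthogonalIdempotents.coe_basis (hf : OrthogonalIdempotents f)
    (hspan : Submodule.span k (range f) = ⊤) :
    ⇑(hf.basis hspan) = fun i : {i // f i ≠ 0} => f i :=
  Module.Basis.coe_mk _ _

theorem OrthogonalIdempotents.orthogonalIdempotents_basis (hf : OrthogonalIdempotents f)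
    (hspan : Submodule.span k (range f) = ⊤) : OrthogonalIdempotents (hf.basis hspan) := by
  rw [coe_basis]
  exact hf.embedding (Embedding.subtype _)

end Basis

section PiOfBasis

variable {k R : Type*} [CommSemiring k] [Semiring R] [Algebra k R] {ι : Type*} [Fintype ι]

theorem Module.Basis.completeOrthogonalIdempotents (b : Module.Basis ι k R)
    (hb : OrthogonalIdempotents b) : CompleteOrthogonalIdempotents b := by
  classical
  refine ⟨hb, ?_⟩
  have hmul : LinearMap.mulLeft k (∑ i, b i) = LinearMap.id :=
    b.ext fun j => by simp [Finset.sum_mul, hb.mul_eq]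
  simpa using LinearMap.congr_fun hmul 1

noncomputable def Module.Basis.algEquivPi (b : Module.Basis ι k R)
    (hb : CompleteOrthogonalIdempotents b) : R ≃ₐ[k] (ι → k) :=
  have : DecidableEq ι := Classical.decEq ι
  (AlgEquiv.ofLinearEquiv b.equivFun.symm (by simp [hb.complete]) fun c d => by
    simp only [Module.Basis.equivFun_symm_apply, Finset.sum_mul_sum, smul_mul_smul_comm,
      hb.mul_eq, smul_ite, smul_zero, Finset.sum_ite_eq, Finset.mem_univ, if_true,
      Pi.mul_apply]).symm

end PiOfBasis

theorem isEtaleAlgebra_of_basis {k R : Type} [Field k] [CommRing R] [Algebra k R] {ι : Type*}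
    [Fintype ι] (b : Module.Basis ι k R) (hb : CompleteOrthogonalIdempotents b) :
    IsEtaleAlgebra k R := by
  let b' := (b.baseChange (AlgebraicClosure k)).reindex (Fintype.equivFin ι)
  have hb' : CompleteOrthogonalIdempotents b' := by
    have := (CompleteOrthogonalIdempotents.equiv (Fintype.equivFin ι).symm).2
      (hb.map (Algebra.TensorProduct.includeRight (R := k) (A := AlgebraicClosure k)).toRingHom)
    convert this using 1
    ext i
    simp [b']
  exact ⟨_, ⟨b'.algEquivPi hb'⟩⟩

theorem sigmaReducedTensor_of_basis {k K R : Type} [CommRing k] [CommRing K] [CommRing R]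
    [Algebra k K] [Algebra k R] {σK : K →+* K} {σR : R →+* R} (hσK : Injective σK) {ι : Type*}
    (b : Module.Basis ι k R) {π : ι → ι} (hπ : Injective π) (hb : ∀ i, σR (b i) = b (π i)) :
    SigmaReducedTensor k K R σK σR := by
  intro τ hτ
  let B := b.baseChange K
  have hτB : ∀ (c : K) i, τ (c • B i) = σK c • B (π i) := fun c i => by
    simp [B, TensorProduct.smul_tmul', hτ, hb]
  refine (injective_iff_map_eq_zero τ).2 fun z hz => ?_
  have hz' : z = ∑ i ∈ (B.repr z).support, B.repr z i • B i := by
    conv_lhs => rw [← B.linearCombination_repr z]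
    rfl
  rw [hz', map_sum] at hz
  simp only [hτB] at hz
  have hzero := linearIndependent_iff'.1 (B.linearIndependent.comp π hπ) _ _ hz
  rw [hz']
  refine Finset.sum_eq_zero fun i hi => ?_
  rw [hσK ((hzero i hi).trans (map_zero σK).symm), zero_smul]

theorem isSigmaSeparable_of_semiconj {k R : Type} [Field k] [CommRing R] [Algebra k R]
    {σk : k →+* k} {σR : R →+* R} {κ : Type*} [Finite κ] {f : κ → R}
    (hf : OrthogonalIdempotents f) (hspan : Submodule.span k (range f) = ⊤)
    {q : Equiv.Perm κ} (hq : Semiconj f q σR) : IsSigmaSeparable k R σk σR := by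
  intro K _ _ σK _
  refine sigmaReducedTensor_of_basis σK.injective (hf.basis hspan)
    (π := fun i => ⟨q i, hq.apply_ne_zero (map_zero σR) i.2⟩) ?_ fun i => ?_
  · exact fun i j h => Subtype.ext (q.injective (congrArg Subtype.val h))
  · simp [hq i]

theorem strongly_etale_stmt8_general
    (k R : Type) [Field k] [CommRing R] [Algebra k R]
    (σk : k →+* k) (σR : R →+* R)
    (s : Finset R)
    (hidem : ∀ e ∈ s, IsIdempotentElem e ∧ ∃ n : ℕ, 0 < n ∧ σR^[n] e = e)
    (hgen : Algebra.adjoin k {x : R | ∃ e ∈ s, ∃ i : ℕ, σR^[i] e = x} = ⊤) :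
    IsEtaleAlgebra k R ∧ IsSigmaSeparable k R σk σR := by
  classical
  set T := forwardOrbit σR s
  have hper : (s : Set R) ⊆ periodicPts σR := fun e he => (hidem e he).2
  have hidemT : ∀ x ∈ T, IsIdempotentElem x := by
    rintro _ ⟨e, he, i, rfl⟩
    exact (hidem e he).1.map (σR ^ i)
  have hσT : BijOn σR T T := bijOn_forwardOrbit s.finite_toSet hper
  have := (finite_forwardOrbit s.finite_toSet hper).fintype
  have he : ∀ x : T, IsIdempotentElem (x : R) := fun x => hidemT x x.2
  have hc := completeOrthogonalIdempotents_idempotentAtom he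
  have hspan := span_idempotentAtom_eq_top (k := k) he (by rwa [Subtype.range_coe])
  refine ⟨isEtaleAlgebra_of_basis _ ((hc.1.basis hspan).completeOrthogonalIdempotents
    (hc.1.orthogonalIdempotents_basis hspan)), isSigmaSeparable_of_semiconj hc.1 hspan
      (q := (hσT.equiv σR).finsetCongr) (Semiconj.idempotentAtom fun _ => rfl)⟩

/-- A `k`-σ-algebra σ-generated by finitely many periodic idempotent elements
is strongly σ-étale. -/
theorem strongly_etale_stmt8
    (k R : Type) [Field k] [CommRing R] [Algebra k R]
    (σk : k →+* k) (σR : R →+* R)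
    (hcomp : ∀ x : k, σR (algebraMap k R x) = algebraMap k R (σk x))
    (s : Finset R)
    (hidem : ∀ e ∈ s, IsIdempotentElem e ∧ ∃ n : ℕ, 0 < n ∧ σR^[n] e = e)
    (hgen : Algebra.adjoin k {x : R | ∃ e ∈ s, ∃ i : ℕ, σR^[i] e = x} = ⊤) :
    IsEtaleAlgebra k R ∧ IsSigmaSeparable k R σk σR :=
  strongly_etale_stmt8_general k R σk σR s hidem hgen
end

section
/- Let k be a difference field and R a k-σ-algebra. If R₁ and R₂ are strongly σ-étale k-σ-subalgebras of R, then the compositum R₁R₂ (the k-subalgebra generated by R₁ and R₂, which is a σ-subalgebra) is strongly σ-étale over k. Consequently the union π₀^σ(R) of all strongly σ-étale k-σ-subalgebras of R is a k-σ-subalgebra of R. -/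
open TensorProduct

/-- A σ-stable subalgebra that is strongly σ-étale over `k`. -/
def IsStronglySigmaEtaleSubalgebra (k R : Type) [Field k] [CommRing R] [Algebra k R]
    (σk : k →+* k) (σR : R →+* R) (A : Subalgebra k R) : Prop :=
  ∃ h : ∀ x ∈ A, σR x ∈ A,
    IsEtaleAlgebra k A ∧ IsSigmaSeparable k A σk (σR.restrict A A h)

/-! Over an algebraically closed field `Ω`, an étale `k`-algebra `A` satisfies
`Ω ⊗ A ≅ Ω ^ Hom_k(A, Ω)`, so the twisted endomorphism `σΩ ⊗ σA` of `Ω ⊗ A` is injective exactly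
when every point `ψ : A → Ω` has a `σ`-preimage `χ`, i.e. `χ ∘ σA = σΩ ∘ ψ`. For an arbitrary
difference field `K` one embeds `K ⊗ A` into `Ω ⊗ A` with `Ω` the algebraic closure of `K`.
This criterion passes to `A₁ ⊗ A₂` pointwise, and to a σ-equivariant quotient `C` of `A₁ ⊗ A₂`
because `σ` permutes the finitely many points of `A₁ ⊗ A₂` and maps the points of `C` into
themselves. The compositum `R₁ R₂` is such a quotient of `R₁ ⊗ R₂`; the union of all strongly
σ-étale subalgebras is then a directed union, nonempty since `⊥` is strongly σ-étale. -/

theorem Algebra.Etale.finite_primeSpectrum_of_field (k A : Type) [Field k] [CommRing A]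
    [Algebra k A] [Algebra.Etale k A] : Finite (PrimeSpectrum A) := by
  have := Algebra.FormallyUnramified.finite_of_free k A
  have : IsArtinianRing A := isArtinian_of_tower k inferInstance
  infer_instance

section Etale

variable {k A : Type} [Field k] [CommRing A] [Algebra k A]

theorem isEtaleAlgebra_iff_etale : IsEtaleAlgebra k A ↔ Algebra.Etale k A := by
  constructor
  · rintro ⟨n, ⟨e⟩⟩
    have : Algebra.Etale (AlgebraicClosure k) (AlgebraicClosure k ⊗[k] A) :=
      Algebra.Etale.of_equiv e.symm
    exact Algebra.Etale.of_etale_tensorProduct_of_faithfullyFlat (AlgebraicClosure k)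
  · intro _
    have := Algebra.Etale.finite_primeSpectrum_of_field (AlgebraicClosure k)
      (AlgebraicClosure k ⊗[k] A)
    exact ⟨_, ⟨(Algebra.FormallyEtale.equivPiOfIsSepClosed _ _).trans
      (AlgEquiv.piCongrLeft' _ _ (Finite.equivFin _))⟩⟩

theorem Algebra.Etale.of_surjective_of_field {C : Type} [CommRing C] [Algebra k C]
    [Algebra.Etale k A] (f : A →ₐ[k] C) (hf : Function.Surjective f) : Algebra.Etale k C := by
  have : Module.Finite k A := Algebra.FormallyUnramified.finite_of_free k A
  have : Module.Finite k C := Module.Finite.of_surjective f.toLinearMap hf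
  have : Algebra.FormallyUnramified k C := Algebra.FormallyUnramified.of_surjective f hf
  have : Algebra.FormallyEtale k C := Algebra.FormallyEtale.of_formallyUnramified_of_field k C
  exact ⟨inferInstance, Algebra.FinitePresentation.of_finiteType.mp inferInstance⟩

instance Algebra.Etale.tensorProduct {B : Type} [CommRing B] [Algebra k B] [Algebra.Etale k A]
    [Algebra.Etale k B] : Algebra.Etale k (A ⊗[k] B) :=
  Algebra.Etale.comp k A (A ⊗[k] B)

end Etale

section SemilinearTensorMap

variable {k : Type} [Field k] (σk : k →+* k)
  {A A' B B' : Type} [CommRing A] [CommRing A'] [CommRing B] [CommRing B']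
  [Algebra k A] [Algebra k A'] [Algebra k B] [Algebra k B']
  (φ : A →+* A') (ψ : B →+* B')

noncomputable def semilinearTensorMap
    (hφ : ∀ x : k, φ (algebraMap k A x) = algebraMap k A' (σk x))
    (hψ : ∀ x : k, ψ (algebraMap k B x) = algebraMap k B' (σk x)) :
    A ⊗[k] B →+* A' ⊗[k] B' :=
  let f : A ⊗[k] B →+ A' ⊗[k] B' := TensorProduct.liftAddHom
    (AddMonoidHom.mk' (fun a => AddMonoidHom.mk' (fun b => φ a ⊗ₜ[k] ψ b)
      fun _ _ => by rw [map_add, tmul_add])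
      fun _ _ => by ext; simp [add_tmul])
    fun r a b => by
      simp only [AddMonoidHom.mk'_apply, Algebra.smul_def, map_mul, hφ, hψ]
      rw [← Algebra.smul_def, ← Algebra.smul_def, smul_tmul]
  { f with
    map_one' := by simp [f, Algebra.TensorProduct.one_def]
    map_mul' := fun z w => by
      change f (z * w) = f z * f w
      induction z using TensorProduct.induction_on with
      | zero => simp
      | add z₁ z₂ h₁ h₂ => simp only [add_mul, map_add, h₁, h₂]
      | tmul a b =>
        induction w using TensorProduct.induction_on with
        | zero => simp
        | add w₁ w₂ h₁ h₂ => simp only [mul_add, map_add, h₁, h₂]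
        | tmul a' b' => simp [f] }

variable {σk φ ψ}

@[simp]
theorem semilinearTensorMap_tmul (hφ) (hψ) (a : A) (b : B) :
    semilinearTensorMap σk φ ψ hφ hψ (a ⊗ₜ[k] b) = φ a ⊗ₜ[k] ψ b :=
  rfl

theorem semilinearTensorMap_algebraMap (hφ) (hψ) (x : k) :
    semilinearTensorMap σk φ ψ hφ hψ (algebraMap k (A ⊗[k] B) x) =
      algebraMap k (A' ⊗[k] B') (σk x) := by
  simp [Algebra.TensorProduct.algebraMap_apply, hφ]

end SemilinearTensorMap

section Points

variable {Ω B : Type} [Field Ω] [IsSepClosed Ω] [CommRing B] [Algebra Ω B] [Algebra.Etale Ω B]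

theorem Algebra.Etale.eq_zero_of_forall_algHom_eq_zero {z : B}
    (h : ∀ φ : B →ₐ[Ω] Ω, φ z = 0) : z = 0 := by
  let E := Algebra.FormallyEtale.equivPiOfIsSepClosed Ω B
  refine E.injective (funext fun p => ?_)
  simpa using h ((Pi.evalAlgHom Ω (fun _ => Ω) p).comp E.toAlgHom)

theorem Algebra.Etale.exists_idempotent_of_algHom (φ : B →ₐ[Ω] Ω) :
    ∃ e : B, φ e = 1 ∧ ∀ z, z * e = algebraMap Ω B (φ z) * e := by
  classical
  let E := Algebra.FormallyEtale.equivPiOfIsSepClosed Ω B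
  have := Algebra.Etale.finite_primeSpectrum_of_field Ω B
  have := Fintype.ofFinite (PrimeSpectrum B)
  obtain ⟨p, -, hp⟩ : ∃ p ∈ Finset.univ, φ (E.symm (Pi.single p 1)) ≠ 0 := by
    refine Finset.exists_ne_zero_of_sum_ne_zero ?_
    rw [← map_sum, ← map_sum, Finset.univ_sum_single]
    change φ (E.symm 1) ≠ 0
    simp
  set e := E.symm (Pi.single p 1)
  have he : ∀ z, z * e = algebraMap Ω B (E z p) * e := fun z =>
    E.injective <| funext fun q => by
      by_cases hq : q = p
      · subst hq; simp [e]
      · simp [e, hq]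
  have hφ : ∀ z, φ z = E z p := fun z =>
    mul_right_cancel₀ hp (by simpa using congrArg φ (he z))
  exact ⟨e, by simp [hφ, e], fun z => by rw [he, hφ]⟩

theorem Algebra.Etale.injective_iff_forall_exists_algHom (σΩ : Ω →+* Ω) (τ : B →+* B)
    (hτ : ∀ ω, τ (algebraMap Ω B ω) = algebraMap Ω B (σΩ ω)) :
    Function.Injective τ ↔ ∀ φ : B →ₐ[Ω] Ω, ∃ χ : B →ₐ[Ω] Ω, ∀ z, χ (τ z) = σΩ (φ z) := by
  constructor
  · intro hinj φ
    obtain ⟨e, hφe, he⟩ := exists_idempotent_of_algHom φ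
    have hτe : τ e ≠ 0 := fun h0 =>
      one_ne_zero (by rw [← hφe, hinj (h0.trans (map_zero τ).symm), map_zero])
    obtain ⟨χ, hχ⟩ : ∃ χ : B →ₐ[Ω] Ω, χ (τ e) ≠ 0 := by
      by_contra! h
      exact hτe (eq_zero_of_forall_algHom_eq_zero h)
    have hχe : χ (τ e) = 1 := by
      refine mul_left_cancel₀ hχ ?_
      rw [← map_mul, ← map_mul, he, hφe, map_one, one_mul, mul_one]
    refine ⟨χ, fun z => ?_⟩
    -- `e` cuts out the point `φ`, and `χ` sees exactly the image of `e`
    calc χ (τ z) = χ (τ (z * e)) := by rw [map_mul, map_mul, hχe, mul_one]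
      _ = σΩ (φ z) := by rw [he, map_mul, map_mul, hτ, hχe, mul_one, AlgHom.commutes,
          Algebra.algebraMap_self, RingHom.id_apply]
  · intro h
    refine (injective_iff_map_eq_zero τ).2 fun z hz =>
      eq_zero_of_forall_algHom_eq_zero (Ω := Ω) fun φ => ?_
    obtain ⟨χ, hχ⟩ := h φ
    rw [← map_eq_zero_iff σΩ σΩ.injective, ← hχ, hz, map_zero]

end Points

theorem exists_ringHom_comp_algebraMap_eq {K L M : Type} [Field K] [Field L] [Field M]
    [Algebra K L] [Algebra.IsAlgebraic K L] [IsAlgClosed M] (g : K →+* M) :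
    ∃ f : L →+* M, f.comp (algebraMap K L) = g := by
  let := g.toAlgebra
  exact ⟨(IsAlgClosed.lift : L →ₐ[K] M), (IsAlgClosed.lift : L →ₐ[K] M).comp_algebraMap⟩

/-- `χ ∘ σA = σΩ ∘ ψ` says that `σ` carries the point `χ` of `A` to `ψ`; the condition is that
every `Ω`-point of `A` is hit. -/
def SigmaPointsSurjective (k A Ω : Type) [Field k] [CommRing A] [Algebra k A] [Field Ω]
    [Algebra k Ω] (σA : A →+* A) (σΩ : Ω →+* Ω) : Prop :=
  ∀ ψ : A →ₐ[k] Ω, ∃ χ : A →ₐ[k] Ω, ∀ a, χ (σA a) = σΩ (ψ a)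

section SigmaSeparable

variable {k A : Type} [Field k] [CommRing A] [Algebra k A] {σk : k →+* k} {σA : A →+* A}

theorem liftEquiv_semilinearTensorMap {Ω : Type} [Field Ω] [Algebra k Ω] {σΩ : Ω →+* Ω}
    (hσΩ : ∀ x, σΩ (algebraMap k Ω x) = algebraMap k Ω (σk x))
    (hσA : ∀ x, σA (algebraMap k A x) = algebraMap k A (σk x))
    {χ ψ : A →ₐ[k] Ω} (h : ∀ a, χ (σA a) = σΩ (ψ a)) (z : Ω ⊗[k] A) :
    AlgHom.liftEquiv k Ω A Ω χ (semilinearTensorMap σk σΩ σA hσΩ hσA z) =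
      σΩ (AlgHom.liftEquiv k Ω A Ω ψ z) := by
  induction z using TensorProduct.induction_on with
  | zero => simp
  | tmul ω a => simp [h]
  | add z₁ z₂ h₁ h₂ => simp only [map_add, h₁, h₂]

theorem injective_semilinearTensorMap_iff {Ω : Type} [Field Ω] [IsSepClosed Ω] [Algebra k Ω]
    [Algebra.Etale k A] {σΩ : Ω →+* Ω}
    (hσΩ : ∀ x, σΩ (algebraMap k Ω x) = algebraMap k Ω (σk x))
    (hσA : ∀ x, σA (algebraMap k A x) = algebraMap k A (σk x)) :
    Function.Injective (semilinearTensorMap σk σΩ σA hσΩ hσA) ↔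
      SigmaPointsSurjective k A Ω σA σΩ := by
  rw [Algebra.Etale.injective_iff_forall_exists_algHom σΩ _ fun ω => by
    simp [Algebra.TensorProduct.algebraMap_apply]]
  constructor
  · intro h ψ
    obtain ⟨χ, hχ⟩ := h (AlgHom.liftEquiv k Ω A Ω ψ)
    exact ⟨(AlgHom.liftEquiv k Ω A Ω).symm χ, fun a => by simpa using hχ (1 ⊗ₜ a)⟩
  · intro h φ
    obtain ⟨χ, hχ⟩ := h ((AlgHom.liftEquiv k Ω A Ω).symm φ)
    refine ⟨AlgHom.liftEquiv k Ω A Ω χ, fun z => ?_⟩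
    simpa using liftEquiv_semilinearTensorMap hσΩ hσA hχ z

theorem isSigmaSeparable_iff [Algebra.Etale k A]
    (hσA : ∀ x, σA (algebraMap k A x) = algebraMap k A (σk x)) :
    IsSigmaSeparable k A σk σA ↔
      ∀ (Ω : Type) [Field Ω] [IsAlgClosed Ω] [Algebra k Ω] (σΩ : Ω →+* Ω),
        (∀ x, σΩ (algebraMap k Ω x) = algebraMap k Ω (σk x)) →
        SigmaPointsSurjective k A Ω σA σΩ := by
  constructor
  · intro h Ω _ _ _ σΩ hσΩ
    exact (injective_semilinearTensorMap_iff hσΩ hσA).1 (h Ω σΩ hσΩ _ fun _ _ => rfl)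
  · intro h K _ _ σK hσK τ hτ
    let Ω := AlgebraicClosure K
    obtain ⟨σΩ, hσΩ⟩ := exists_ringHom_comp_algebraMap_eq (L := Ω) ((algebraMap K Ω).comp σK)
    have hσΩk : ∀ x, σΩ (algebraMap k Ω x) = algebraMap k Ω (σk x) := fun x => by
      rw [IsScalarTower.algebraMap_apply k K Ω, ← RingHom.comp_apply, hσΩ, RingHom.comp_apply,
        hσK, ← IsScalarTower.algebraMap_apply]
    have hinj := (injective_semilinearTensorMap_iff hσΩk hσA).2 (h Ω σΩ hσΩk)
    -- `K ⊗ A ⊆ Ω ⊗ A` by flatness of `A` over the field `k`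
    let ι := Algebra.TensorProduct.map (IsScalarTower.toAlgHom k K Ω) (AlgHom.id k A)
    have hι : Function.Injective ι :=
      Module.Flat.rTensor_preserves_injective_linearMap _ (algebraMap K Ω).injective
    have hcomm : ∀ z, ι (τ z) = semilinearTensorMap σk σΩ σA hσΩk hσA (ι z) := fun z => by
      induction z using TensorProduct.induction_on with
      | zero => simp
      | tmul c a =>
        simp only [ι, hτ, Algebra.TensorProduct.map_tmul, semilinearTensorMap_tmul,
          IsScalarTower.coe_toAlgHom', AlgHom.coe_id, id_eq]
        rw [← RingHom.comp_apply σΩ, hσΩ, RingHom.comp_apply]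
      | add z₁ z₂ h₁ h₂ => simp only [map_add, h₁, h₂]
    exact fun z w hzw => hι (hinj (by rw [← hcomm, ← hcomm, hzw]))

end SigmaSeparable

theorem Finite.exists_mem_rel_of_forall_exists {X : Type} [Finite X] {R : X → X → Prop}
    (hfun : ∀ x y y', R x y → R x y' → y = y') (hsurj : ∀ y, ∃ x, R x y) {Y : Set X}
    (hY : ∀ x ∈ Y, ∀ y, R x y → y ∈ Y) : ∀ y ∈ Y, ∃ x ∈ Y, R x y := by
  choose f hf using hsurj
  have hf_inj : Function.Injective f := fun y y' h => hfun _ _ _ (hf y) (h ▸ hf y')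
  -- `R` is the graph of the permutation `g = f⁻¹`, which maps the finite set `Y` into itself
  let g := (Equiv.ofBijective f ⟨hf_inj, Finite.surjective_of_injective hf_inj⟩).symm
  have hR : ∀ x, R x (g x) := fun x => by
    simpa only [show f (g x) = x from (Equiv.ofBijective f _).apply_symm_apply x] using hf (g x)
  have hg : Set.SurjOn g Y Y :=
    ((Y.toFinite.injOn_iff_bijOn_of_mapsTo fun x hx => hY x hx _ (hR x)).1
      g.injective.injOn).surjOn
  intro y hy
  obtain ⟨x, hx, rfl⟩ := hg hy
  exact ⟨x, hx, hR x⟩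

namespace SigmaPointsSurjective

variable {k Ω : Type} [Field k] [Field Ω] [Algebra k Ω] {σk : k →+* k} {σΩ : Ω →+* Ω}

theorem of_surjective_algebraMap {A : Type} [CommRing A] [Algebra k A] {σA : A →+* A}
    (hA : Function.Surjective (algebraMap k A))
    (hσA : ∀ x, σA (algebraMap k A x) = algebraMap k A (σk x))
    (hσΩ : ∀ x, σΩ (algebraMap k Ω x) = algebraMap k Ω (σk x)) :
    SigmaPointsSurjective k A Ω σA σΩ := fun ψ => ⟨ψ, fun a => by
  obtain ⟨x, rfl⟩ := hA a
  rw [hσA, AlgHom.commutes, AlgHom.commutes, hσΩ]⟩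

theorem tensorProduct {A₁ A₂ : Type} [CommRing A₁] [CommRing A₂] [Algebra k A₁] [Algebra k A₂]
    {σ₁ : A₁ →+* A₁} {σ₂ : A₂ →+* A₂} (hσ₁ : ∀ x, σ₁ (algebraMap k A₁ x) = algebraMap k A₁ (σk x))
    (hσ₂ : ∀ x, σ₂ (algebraMap k A₂ x) = algebraMap k A₂ (σk x))
    (h₁ : SigmaPointsSurjective k A₁ Ω σ₁ σΩ) (h₂ : SigmaPointsSurjective k A₂ Ω σ₂ σΩ) :
    SigmaPointsSurjective k (A₁ ⊗[k] A₂) Ω (semilinearTensorMap σk σ₁ σ₂ hσ₁ hσ₂) σΩ := by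
  intro ψ
  obtain ⟨χ₁, hχ₁⟩ := h₁ (ψ.comp Algebra.TensorProduct.includeLeft)
  obtain ⟨χ₂, hχ₂⟩ := h₂ (ψ.comp Algebra.TensorProduct.includeRight)
  refine ⟨Algebra.TensorProduct.productMap χ₁ χ₂, fun z => ?_⟩
  induction z using TensorProduct.induction_on with
  | zero => simp
  | tmul a₁ a₂ =>
    simp [hχ₁, hχ₂, ← map_mul]
  | add z₁ z₂ h₁ h₂ => simp only [map_add, h₁, h₂]

theorem of_surjective {A C : Type} [CommRing A] [CommRing C] [Algebra k A] [Algebra k C]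
    [Module.Finite k A] {σA : A →+* A} {σC : C →+* C} (π : A →ₐ[k] C)
    (hπ : Function.Surjective π) (hπσ : ∀ a, π (σA a) = σC (π a))
    (h : SigmaPointsSurjective k A Ω σA σΩ) : SigmaPointsSurjective k C Ω σC σΩ := by
  intro ψ
  let Y : Set (A →ₐ[k] Ω) := Set.range fun χ : C →ₐ[k] Ω => χ.comp π
  have hY : ∀ χ ∈ Y, ∀ ψ : A →ₐ[k] Ω, (∀ a, χ (σA a) = σΩ (ψ a)) → ψ ∈ Y := by
    rintro _ ⟨χ, rfl⟩ ψ hχψ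
    refine ⟨π.liftOfSurjective hπ ψ fun a ha => ?_, π.liftOfSurjective_comp hπ ψ _⟩
    rw [RingHom.mem_ker] at ha ⊢
    change ψ a = 0
    rw [← map_eq_zero_iff σΩ σΩ.injective, ← hχψ]
    simp [hπσ, show π a = 0 from ha]
  have hfun : ∀ χ ψ ψ' : A →ₐ[k] Ω, (∀ a, χ (σA a) = σΩ (ψ a)) →
      (∀ a, χ (σA a) = σΩ (ψ' a)) → ψ = ψ' := fun χ ψ ψ' h h' =>
    AlgHom.ext fun a => σΩ.injective ((h a).symm.trans (h' a))
  obtain ⟨_, ⟨χ, rfl⟩, hχ⟩ :=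
    Finite.exists_mem_rel_of_forall_exists hfun h hY (ψ.comp π) ⟨ψ, rfl⟩
  refine ⟨χ, fun c => ?_⟩
  obtain ⟨a, rfl⟩ := hπ c
  simpa [hπσ] using hχ a

end SigmaPointsSurjective

namespace IsSigmaSeparable

variable {k : Type} [Field k] {σk : k →+* k}

theorem tensorProduct {A₁ A₂ : Type} [CommRing A₁] [CommRing A₂] [Algebra k A₁] [Algebra k A₂]
    [Algebra.Etale k A₁] [Algebra.Etale k A₂] {σ₁ : A₁ →+* A₁} {σ₂ : A₂ →+* A₂}
    (hσ₁ : ∀ x, σ₁ (algebraMap k A₁ x) = algebraMap k A₁ (σk x))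
    (hσ₂ : ∀ x, σ₂ (algebraMap k A₂ x) = algebraMap k A₂ (σk x))
    (h₁ : IsSigmaSeparable k A₁ σk σ₁) (h₂ : IsSigmaSeparable k A₂ σk σ₂) :
    IsSigmaSeparable k (A₁ ⊗[k] A₂) σk (semilinearTensorMap σk σ₁ σ₂ hσ₁ hσ₂) := by
  rw [isSigmaSeparable_iff hσ₁] at h₁
  rw [isSigmaSeparable_iff hσ₂] at h₂
  rw [isSigmaSeparable_iff (semilinearTensorMap_algebraMap hσ₁ hσ₂)]
  intro Ω _ _ _ σΩ hσΩ
  exact .tensorProduct hσ₁ hσ₂ (h₁ Ω σΩ hσΩ) (h₂ Ω σΩ hσΩ)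

theorem of_surjective {A C : Type} [CommRing A] [CommRing C] [Algebra k A] [Algebra k C]
    [Algebra.Etale k A] {σA : A →+* A} {σC : C →+* C}
    (hσA : ∀ x, σA (algebraMap k A x) = algebraMap k A (σk x))
    (hσC : ∀ x, σC (algebraMap k C x) = algebraMap k C (σk x))
    (π : A →ₐ[k] C) (hπ : Function.Surjective π) (hπσ : ∀ a, π (σA a) = σC (π a))
    (h : IsSigmaSeparable k A σk σA) : IsSigmaSeparable k C σk σC := by
  have : Algebra.Etale k C := .of_surjective_of_field π hπ
  have : Module.Finite k A := Algebra.FormallyUnramified.finite_of_free k A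
  rw [isSigmaSeparable_iff hσA] at h
  rw [isSigmaSeparable_iff hσC]
  intro Ω _ _ _ σΩ hσΩ
  exact .of_surjective π hπ hπσ (h Ω σΩ hσΩ)

end IsSigmaSeparable

namespace IsStronglySigmaEtaleSubalgebra

variable {k R : Type} [Field k] [CommRing R] [Algebra k R] {σk : k →+* k} {σR : R →+* R}

theorem bot (hcomp : ∀ x : k, σR (algebraMap k R x) = algebraMap k R (σk x)) :
    IsStronglySigmaEtaleSubalgebra k R σk σR ⊥ := by
  have hst : ∀ x ∈ (⊥ : Subalgebra k R), σR x ∈ (⊥ : Subalgebra k R) := by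
    rintro _ ⟨y, rfl⟩
    exact ⟨σk y, (hcomp y).symm⟩
  have hsurj : Function.Surjective (algebraMap k (⊥ : Subalgebra k R)) := by
    rintro ⟨_, y, rfl⟩
    exact ⟨y, rfl⟩
  have hσ : ∀ x, σR.restrict ⊥ ⊥ hst (algebraMap k _ x) = algebraMap k _ (σk x) :=
    fun x => Subtype.ext (hcomp x)
  have : Algebra.Etale k (⊥ : Subalgebra k R) := .of_surjective_of_field (Algebra.ofId k _) hsurj
  exact ⟨hst, isEtaleAlgebra_iff_etale.2 this, (isSigmaSeparable_iff hσ).2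
    fun _ _ _ _ _ hσΩ => .of_surjective_algebraMap hsurj hσ hσΩ⟩

theorem sup (hcomp : ∀ x : k, σR (algebraMap k R x) = algebraMap k R (σk x))
    {R₁ R₂ : Subalgebra k R} (h₁ : IsStronglySigmaEtaleSubalgebra k R σk σR R₁)
    (h₂ : IsStronglySigmaEtaleSubalgebra k R σk σR R₂) :
    IsStronglySigmaEtaleSubalgebra k R σk σR (R₁ ⊔ R₂) := by
  obtain ⟨hst₁, hE₁, hS₁⟩ := h₁
  obtain ⟨hst₂, hE₂, hS₂⟩ := h₂
  have := isEtaleAlgebra_iff_etale.1 hE₁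
  have := isEtaleAlgebra_iff_etale.1 hE₂
  have hσ₁ : ∀ x, σR.restrict R₁ R₁ hst₁ (algebraMap k R₁ x) = algebraMap k R₁ (σk x) :=
    fun x => Subtype.ext (hcomp x)
  have hσ₂ : ∀ x, σR.restrict R₂ R₂ hst₂ (algebraMap k R₂ x) = algebraMap k R₂ (σk x) :=
    fun x => Subtype.ext (hcomp x)
  let π := Algebra.TensorProduct.productMap R₁.val R₂.val
  have hπσ : ∀ z, π (semilinearTensorMap σk _ _ hσ₁ hσ₂ z) = σR (π z) := fun z => by
    induction z using TensorProduct.induction_on with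
    | zero => simp
    | tmul r₁ r₂ => simp [π]
    | add z₁ z₂ h₁ h₂ => simp only [map_add, h₁, h₂]
  have hrange : π.range = R₁ ⊔ R₂ := by
    rw [Algebra.TensorProduct.productMap_range, Subalgebra.range_val, Subalgebra.range_val]
  have hst : ∀ x ∈ R₁ ⊔ R₂, σR x ∈ R₁ ⊔ R₂ := by
    rw [← hrange]
    rintro _ ⟨z, rfl⟩
    exact ⟨_, hπσ z⟩
  let π' := π.codRestrict (R₁ ⊔ R₂) fun z => hrange ▸ ⟨z, rfl⟩
  have hπ' : Function.Surjective π' := by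
    rintro ⟨x, hx⟩
    rw [← hrange] at hx
    obtain ⟨z, rfl⟩ := hx
    exact ⟨z, rfl⟩
  exact ⟨hst, isEtaleAlgebra_iff_etale.2 (.of_surjective_of_field π' hπ'),
    (hS₁.tensorProduct hσ₁ hσ₂ hS₂).of_surjective
      (semilinearTensorMap_algebraMap hσ₁ hσ₂) (fun x => Subtype.ext (hcomp x)) π' hπ'
      fun z => Subtype.ext (hπσ z)⟩

end IsStronglySigmaEtaleSubalgebra

/-- The compositum of two strongly σ-étale `k`-σ-subalgebras is strongly σ-étale;
consequently the union of all strongly σ-étale `k`-σ-subalgebras is a σ-stable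
`k`-subalgebra of `R`. -/
theorem strongly_etale_stmt11
    (k R : Type) [Field k] [CommRing R] [Algebra k R]
    (σk : k →+* k) (σR : R →+* R)
    (hcomp : ∀ x : k, σR (algebraMap k R x) = algebraMap k R (σk x)) :
    (∀ R₁ R₂ : Subalgebra k R,
      IsStronglySigmaEtaleSubalgebra k R σk σR R₁ →
      IsStronglySigmaEtaleSubalgebra k R σk σR R₂ →
      IsStronglySigmaEtaleSubalgebra k R σk σR (R₁ ⊔ R₂)) ∧
    ∃ C : Subalgebra k R,
      ((C : Set R) = ⋃ A ∈ {A : Subalgebra k R | IsStronglySigmaEtaleSubalgebra k R σk σR A},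
        (A : Set R)) ∧ (∀ x ∈ C, σR x ∈ C) := by
  let 𝒮 := {A : Subalgebra k R | IsStronglySigmaEtaleSubalgebra k R σk σR A}
  have : Nonempty 𝒮 := ⟨⟨⊥, .bot hcomp⟩⟩
  have hdir : Directed (· ≤ ·) fun A : 𝒮 => (A : Subalgebra k R) := fun A B =>
    ⟨⟨_, A.2.sup hcomp B.2⟩, le_sup_left, le_sup_right⟩
  have hcoe : ((⨆ A : 𝒮, (A : Subalgebra k R) : Subalgebra k R) : Set R) =
      ⋃ A ∈ 𝒮, (A : Set R) := by
    rw [Subalgebra.coe_iSup_of_directed hdir, Set.iUnion_coe_set]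
  refine ⟨fun R₁ R₂ h₁ h₂ => h₁.sup hcomp h₂, _, hcoe, fun x hx => ?_⟩
  rw [← SetLike.mem_coe, hcoe, Set.mem_iUnion₂] at hx ⊢
  obtain ⟨A, hA, hxA⟩ := hx
  exact ⟨A, hA, hA.1 x hxA⟩
end

section
/- Let L|K be a finite separable extension of difference fields. Then L is σ-radicial over its strong core π₀^σ(L|K): for every a ∈ L there exists n ∈ ℕ with σⁿ(a) ∈ π₀^σ(L|K). Moreover, there exists n ∈ ℕ such that the intermediate field K(σⁿ(L)) is σ-separable over K and contained in π₀^σ(L|K). -/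
/-!
The fields `K(σⁿ(L))` form a decreasing chain of `K`-subspaces of `L`, so the chain stabilises:
for some `n`, `M := K(σⁿ(L))` is generated over `K` by `σ(M)`. For a finite extension `M|K` this
means that `σ(M)` spans `M` over `K`, so `σ` maps a `K`-basis of `M` to a `K`-basis. After base
change to any difference field `K'`, the diagonal `σ` on `K' ⊗_K M` is then semilinear over the
injective `σ` of `K'` and sends a `K'`-basis to a `K'`-basis, hence is injective. Thus `M` is
σ-separable, and being finite separable over `K` it lies in the strong core, which therefore
contains `σⁿ(a)` for every `a ∈ L`.
-/

open TensorProduct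

/-- The strong core `π₀^σ(L|K)` of a difference field extension: the union of all
intermediate σ-fields that are finite separable and σ-separable over `K`. -/
def strongCoreSet (K L : Type) [Field K] [Field L] [Algebra K L]
    (σK : K →+* K) (σL : L →+* L) : Set L :=
  {a : L | ∃ M : IntermediateField K L, a ∈ M ∧ ∃ h : ∀ x ∈ M, σL x ∈ M,
    FiniteDimensional K ↥M ∧ Algebra.IsSeparable K ↥M ∧
      IsSigmaSeparable K ↥M σK (σL.restrict M M h)}

theorem LinearMap.injective_of_linearIndependent_comp_basis {R V W ι : Type*} [Fintype ι]
    [Ring R] [AddCommGroup V] [Module R V] [AddCommGroup W] [Module R W]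
    {σ : R →+* R} (hσ : Function.Injective σ) (f : V →ₛₗ[σ] W) (b : Module.Basis ι R V)
    (hb : LinearIndependent R (f ∘ b)) : Function.Injective f := by
  refine (injective_iff_map_eq_zero f).mpr fun v hv => b.forall_coord_eq_zero_iff.mp fun i => ?_
  have hsum : ∑ j, σ (b.repr v j) • f (b j) = 0 := by
    rw [← hv]
    conv_rhs => rw [← b.sum_repr v]
    simp only [map_sum, map_smulₛₗ]
  exact (map_eq_zero_iff σ hσ).mp (Fintype.linearIndependent_iff.mp hb _ hsum i)

section TensorProduct

variable {K M : Type} [Field K] [CommRing M] [Algebra K M]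

theorem map_smul_of_map_tmul {K' : Type} [Field K'] [Algebra K K'] {σK' : K' →+* K'}
    {σM : M →+* M} {τ : K' ⊗[K] M →+* K' ⊗[K] M}
    (hτ : ∀ a m, τ (a ⊗ₜ[K] m) = σK' a ⊗ₜ[K] σM m) (c : K') (x : K' ⊗[K] M) :
    τ (c • x) = σK' c • τ x := by
  rw [Algebra.smul_def, Algebra.smul_def, map_mul]
  congr 1
  exact (hτ c 1).trans (by rw [map_one]; rfl)

theorem IsSigmaSeparable.of_span_range_eq_top [FiniteDimensional K M] {σK : K →+* K}
    {σM : M →+* M} (hcomp : ∀ x : K, σM (algebraMap K M x) = algebraMap K M (σK x))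
    (hspan : Submodule.span K (Set.range σM) = ⊤) : IsSigmaSeparable K M σK σM := by
  intro K' _ _ σK' _ τ hτ
  let b := Module.finBasis K M
  have hσb : Submodule.span K (Set.range (σM ∘ b)) = ⊤ := by
    refine eq_top_iff.mpr (hspan ▸ Submodule.span_le.mpr ?_)
    rintro _ ⟨m, rfl⟩
    rw [← b.sum_repr m, map_sum]
    refine Submodule.sum_mem _ fun i _ => ?_
    rw [Algebra.smul_def, map_mul, hcomp, ← Algebra.smul_def]
    exact Submodule.smul_mem _ _ (Submodule.subset_span ⟨i, rfl⟩)
  have hw : LinearIndependent K' (fun i => (1 : K') ⊗ₜ[K] σM (b i)) := by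
    refine linearIndependent_of_top_le_span_of_card_eq_finrank ?_ ?_
    · have hrange : Set.range (fun i => (1 : K') ⊗ₜ[K] σM (b i)) =
          TensorProduct.mk K K' M 1 '' Set.range (σM ∘ b) := by
        rw [← Set.range_comp]; rfl
      rw [hrange, ← Submodule.baseChange_span, hσb, Submodule.baseChange_top]
    · rw [Module.finrank_baseChange, Fintype.card_fin]
  let τₛₗ : K' ⊗[K] M →ₛₗ[σK'] K' ⊗[K] M :=
    { τ.toAddMonoidHom with map_smul' := map_smul_of_map_tmul hτ }
  have hτb : τₛₗ ∘ b.baseChange K' = fun i => (1 : K') ⊗ₜ[K] σM (b i) := by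
    ext i
    simp [τₛₗ, hτ]
  exact LinearMap.injective_of_linearIndependent_comp_basis σK'.injective τₛₗ
    (b.baseChange K') (hτb ▸ hw)

end TensorProduct

instance IntermediateField.wellFoundedLT_of_finiteDimensional {K L : Type} [Field K] [Field L]
    [Algebra K L] [FiniteDimensional K L] : WellFoundedLT (IntermediateField K L) :=
  (Subalgebra.toSubmodule.strictMono.comp IntermediateField.toSubalgebra_strictMono).wellFoundedLT

namespace IntermediateField

variable {K L : Type} [Field K] [Field L] [Algebra K L] {σK : K →+* K} {σL : L →+* L}

theorem apply_mem_adjoin_image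
    (hcomp : ∀ x : K, σL (algebraMap K L x) = algebraMap K L (σK x)) {s : Set L} {x : L}
    (hx : x ∈ adjoin K s) : σL x ∈ adjoin K (σL '' s) := by
  have hmap : (adjoin K s).toSubfield.map σL ≤ (adjoin K (σL '' s)).toSubfield := by
    rw [adjoin_toSubfield, adjoin_toSubfield, RingHom.map_field_closure, Set.image_union,
      ← Set.range_comp]
    refine Subfield.closure_mono (Set.union_subset_union_left _ ?_)
    rintro _ ⟨c, rfl⟩
    exact ⟨σK c, (hcomp c).symm⟩
  exact hmap ⟨x, hx, rfl⟩

theorem adjoin_image_adjoin_range_iterate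
    (hcomp : ∀ x : K, σL (algebraMap K L x) = algebraMap K L (σK x)) (n : ℕ) :
    adjoin K (σL '' adjoin K (Set.range σL^[n])) = adjoin K (Set.range σL^[n + 1]) := by
  have hrange : Set.range σL^[n + 1] = σL '' Set.range σL^[n] := by
    rw [Function.iterate_succ', Set.range_comp]
  refine le_antisymm (adjoin_le_iff.mpr ?_) (adjoin.mono _ _ _ ?_)
  · rintro _ ⟨x, hx, rfl⟩
    exact hrange ▸ apply_mem_adjoin_image hcomp hx
  · exact hrange ▸ Set.image_mono (subset_adjoin K _)

theorem exists_adjoin_range_iterate_succ_eq [FiniteDimensional K L] :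
    ∃ n, adjoin K (Set.range σL^[n + 1]) = adjoin K (Set.range σL^[n]) := by
  have hanti : Antitone fun n => adjoin K (Set.range σL^[n]) := by
    refine antitone_nat_of_succ_le fun n => adjoin.mono _ _ _ ?_
    rw [Function.iterate_succ]
    exact Set.range_comp_subset_range _ _
  obtain ⟨n, hn⟩ := WellFoundedLT.antitone_chain_condition hanti
  exact ⟨n, (hn (n + 1) n.le_succ).symm⟩

theorem span_range_eq_top_of_adjoin_range_eq_top {M : Type} [Field M] [Algebra K M]
    [Algebra.IsAlgebraic K M] {σM : M →+* M} (h : adjoin K (Set.range σM) = ⊤) :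
    Submodule.span K (Set.range σM) = ⊤ := by
  have hclosure : (Submonoid.closure (Set.range σM) : Set M) = Set.range σM := by
    rw [← σM.coe_rangeS, ← Subsemiring.coe_toSubmonoid, Submonoid.closure_eq]
  rw [← Algebra.adjoin_eq_span_of_subset K (hclosure.trans_subset Submodule.subset_span),
    ← adjoin_toSubalgebra_of_isAlgebraic fun x _ => Algebra.IsAlgebraic.isAlgebraic x, h,
    top_toSubalgebra, Algebra.top_toSubmodule]

theorem adjoin_range_restrict_eq_top (M : IntermediateField K L) (hM : ∀ x ∈ M, σL x ∈ M)
    (hgen : adjoin K (σL '' M) = M) : adjoin K (Set.range (σL.restrict M M hM)) = ⊤ := by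
  have hval : Subtype.val '' Set.range (σL.restrict M M hM) = σL '' M := by
    rw [← Set.range_comp, show Subtype.val ∘ σL.restrict M M hM = σL ∘ Subtype.val from rfl,
      Set.range_comp, Subtype.range_coe]
  apply lift_injective
  rw [lift_adjoin, lift_top, hval, hgen]

theorem isSigmaSeparable_restrict_of_adjoin_image_eq
    (hcomp : ∀ x : K, σL (algebraMap K L x) = algebraMap K L (σK x))
    (M : IntermediateField K L) [FiniteDimensional K M] (hM : ∀ x ∈ M, σL x ∈ M)
    (hgen : adjoin K (σL '' M) = M) : IsSigmaSeparable K M σK (σL.restrict M M hM) :=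
  IsSigmaSeparable.of_span_range_eq_top (fun x => Subtype.ext (hcomp x))
    (span_range_eq_top_of_adjoin_range_eq_top (adjoin_range_restrict_eq_top M hM hgen))

end IntermediateField

/-- A finite separable extension of difference fields `L|K` is σ-radicial over its
strong core; moreover some `K(σⁿ(L))` is σ-separable over `K` and contained in the
strong core. -/
theorem strongly_etale_stmt16
    (K L : Type) [Field K] [Field L] [Algebra K L]
    [FiniteDimensional K L] [Algebra.IsSeparable K L]
    (σK : K →+* K) (σL : L →+* L)
    (hcomp : ∀ x : K, σL (algebraMap K L x) = algebraMap K L (σK x)) :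
    (∀ a : L, ∃ n : ℕ, σL^[n] a ∈ strongCoreSet K L σK σL) ∧
      ∃ n : ℕ, ∃ hst : ∀ x ∈ IntermediateField.adjoin K (Set.range (σL^[n])),
          σL x ∈ IntermediateField.adjoin K (Set.range (σL^[n])),
        IsSigmaSeparable K ↥(IntermediateField.adjoin K (Set.range (σL^[n]))) σK
            (σL.restrict _ _ hst) ∧
          (IntermediateField.adjoin K (Set.range (σL^[n])) : Set L)
            ⊆ strongCoreSet K L σK σL := by
  obtain ⟨n, hn⟩ := IntermediateField.exists_adjoin_range_iterate_succ_eq (K := K) (σL := σL)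
  set M := IntermediateField.adjoin K (Set.range σL^[n])
  have hgen : IntermediateField.adjoin K (σL '' M) = M :=
    (IntermediateField.adjoin_image_adjoin_range_iterate hcomp n).trans hn
  have hM : ∀ x ∈ M, σL x ∈ M := fun x hx =>
    hgen ▸ IntermediateField.subset_adjoin K _ ⟨x, hx, rfl⟩
  have hsig := IntermediateField.isSigmaSeparable_restrict_of_adjoin_image_eq hcomp M hM hgen
  have hcore : (M : Set L) ⊆ strongCoreSet K L σK σL := fun a ha =>
    ⟨M, ha, hM, inferInstance, Algebra.isSeparable_tower_bot_of_isSeparable K M L, hsig⟩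
  exact ⟨fun a => ⟨n, hcore (IntermediateField.subset_adjoin K _ ⟨a, rfl⟩)⟩, n, hM, hsig, hcore⟩
end

section
/- Let L|K be a σ-radicial extension of difference fields (every a ∈ L has σⁿ(a) ∈ K for some n) and let L'|K be any extension of difference fields. Then L|K and L'|K are compatible: there exists a difference field extension M of K together with K-embeddings of difference fields L → M and L' → M. -/
section Aux

variable {K L : Type} [Field K] [Field L]

theorem iter_commute_aux (σK : K →+* K) (σL : L →+* L) (ι : K →+* L)
    (h : ∀ x : K, σL (ι x) = ι (σK x)) :
    ∀ (n : ℕ) (x : K), σL^[n] (ι x) = ι (σK^[n] x) := by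
  intro n
  induction n with
  | zero => intro x; simp
  | succ n ih =>
    intro x
    rw [Function.iterate_succ_apply, h, ih, Function.iterate_succ_apply]

end Aux

/-- A witness of compatibility of two difference field extensions `L|K` and `L'|K`:
a difference field `M` together with embeddings of `L` and `L'` into `M` that agree
on `K` and commute with the endomorphisms. -/
structure CompatibilityWitness (K L L' : Type) [Field K] [Field L] [Field L']
    [Algebra K L] [Algebra K L']
    (σK : K →+* K) (σL : L →+* L) (σL' : L' →+* L') where
  M : Type
  [instField : Field M]
  σM : M →+* M
  f : L →+* M
  g : L' →+* M
  agree : ∀ x : K, f (algebraMap K L x) = g (algebraMap K L' x)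
  fσ : ∀ x : L, f (σL x) = σM (f x)
  gσ : ∀ y : L', g (σL' y) = σM (g y)

/-- A σ-radicial extension `L|K` is compatible with every difference field
extension `L'|K`. -/
theorem strongly_etale_stmt18
    (K L L' : Type) [Field K] [Field L] [Field L'] [Algebra K L] [Algebra K L']
    (σK : K →+* K) (σL : L →+* L) (σL' : L' →+* L')
    (hL : ∀ x : K, σL (algebraMap K L x) = algebraMap K L (σK x))
    (hL' : ∀ x : K, σL' (algebraMap K L' x) = algebraMap K L' (σK x))
    (hrad : ∀ a : L, ∃ n : ℕ, σL^[n] a ∈ (algebraMap K L).range) :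
    Nonempty (CompatibilityWitness K L L' σK σL σL') := by
  classical
  set ι := algebraMap K L with hι
  set ι' := algebraMap K L' with hι'
  have hLiter : ∀ (n : ℕ) (x : K), σL^[n] (ι x) = ι (σK^[n] x) :=
    iter_commute_aux σK σL ι hL
  have hL'iter : ∀ (n : ℕ) (x : K), σL'^[n] (ι' x) = ι' (σK^[n] x) :=
    iter_commute_aux σK σL' ι' hL'
  -- the directed system of copies of L' with transition maps powers of σL'
  set G : ℕ → Type := fun _ => L' with hG
  letI instG : ∀ i, Field (G i) := fun _ => inferInstanceAs (Field L')
  set t : ∀ i j : ℕ, i ≤ j → G i →+* G j := fun i j _ => σL' ^ (j - i) with ht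
  haveI hds : DirectedSystem G (fun i j h => t i j h) := by
    constructor
    · intro i x; simp [ht]
    · intro k j i hij hjk x
      show (σL' ^ (k - j)) ((σL' ^ (j - i)) x) = (σL' ^ (k - i)) x
      rw [← RingHom.comp_apply]
      rw [← RingHom.mul_def, ← pow_add]
      congr 2
      omega
  set M := Ring.DirectLimit G (fun i j h => t i j h) with hM
  letI instM : Field M := Field.DirectLimit.field G t
  set of : ∀ i : ℕ, G i →+* M := fun i => Ring.DirectLimit.of G (fun i j h => t i j h) i
    with hof
  have hpowcoe : ∀ (n : ℕ) (x : L'), (σL' ^ n) x = σL'^[n] x := by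
    intro n x; rw [RingHom.coe_pow]
  have hof_step : ∀ (i j : ℕ) (h : i ≤ j) (x : L'), of j (σL'^[j - i] x) = of i x := by
    intro i j h x
    rw [← hpowcoe]
    exact Ring.DirectLimit.of_f (G := G) (f := fun i j h => t i j h) h x
  have hof_step2 : ∀ (i d : ℕ) (x : L'), of (i + d) (σL'^[d] x) = of i x := by
    intro i d x
    have := hof_step i (i + d) (Nat.le_add_right i d) x
    rwa [Nat.add_sub_cancel_left] at this
  have compat : ∀ (i j : ℕ) (hij : i ≤ j) (x : G i),
      ((of j).comp σL') (t i j hij x) = ((of i).comp σL') x := by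
    intro i j hij x
    show of j (σL' ((σL' ^ (j - i)) x)) = of i (σL' x)
    have h1 : σL' ((σL' ^ (j - i)) x) = (σL' ^ (j - i)) (σL' x) := by
      show (σL' * σL' ^ (j - i)) x = (σL' ^ (j - i) * σL') x
      rw [pow_mul_comm']
    rw [h1]
    exact Ring.DirectLimit.of_f (G := G) (f := fun i j h => t i j h) hij (σL' x)
  set σM : M →+* M := Ring.DirectLimit.lift G (fun i j h => t i j h) M
    (fun i => (of i).comp σL') compat with hσM
  have σM_of : ∀ (i : ℕ) (x : L'), σM (of i x) = of i (σL' x) := by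
    intro i x
    exact Ring.DirectLimit.lift_of (G := G) (f := fun i j h => t i j h) M
      (fun i => (of i).comp σL') compat i x
  -- well-definedness of the map L → M
  have welldef : ∀ (a : L) (n m : ℕ) (k k' : K),
      σL^[n] a = ι k → σL^[m] a = ι k' → of n (ι' k) = of m (ι' k') := by
    intro a n m k k' hk hk'
    have c1 : σL^[n + m] a = ι (σK^[m] k) := by
      rw [Nat.add_comm n m, Function.iterate_add_apply, hk, hLiter]
    have c2 : σL^[n + m] a = ι (σK^[n] k') := by
      rw [Function.iterate_add_apply, hk', hLiter]
    have heq : σK^[m] k = σK^[n] k' := ι.injective (by rw [← c1, ← c2])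
    calc of n (ι' k) = of (n + m) (σL'^[m] (ι' k)) := (hof_step2 n m _).symm
      _ = of (n + m) (ι' (σK^[m] k)) := by rw [hL'iter]
      _ = of (n + m) (ι' (σK^[n] k')) := by rw [heq]
      _ = of (m + n) (σL'^[n] (ι' k')) := by rw [hL'iter, Nat.add_comm n m]
      _ = of m (ι' k') := hof_step2 m n _
  -- choose the data
  have hrad' : ∀ a : L, ∃ (n : ℕ) (k : K), σL^[n] a = ι k := by
    intro a
    obtain ⟨n, k, hk⟩ := hrad a
    exact ⟨n, k, hk.symm⟩
  choose nn kk spec using hrad'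
  set F : L → M := fun a => of (nn a) (ι' (kk a)) with hF
  have Fkey : ∀ (a : L) (n : ℕ) (k : K), σL^[n] a = ι k → F a = of n (ι' k) := by
    intro a n k h
    exact welldef a (nn a) n (kk a) k (spec a) h
  have Fone : F 1 = 1 := by
    have h : σL^[0] (1 : L) = ι 1 := by simp
    rw [Fkey 1 0 1 h, map_one, map_one]
  have Fzero : F 0 = 0 := by
    have h : σL^[0] (0 : L) = ι 0 := by simp
    rw [Fkey 0 0 0 h, map_zero, map_zero]
  have piece1 : ∀ a b : L, σL^[nn a + nn b] a = ι (σK^[nn b] (kk a)) := by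
    intro a b
    rw [Nat.add_comm (nn a) (nn b), Function.iterate_add_apply, spec a, hLiter]
  have piece2 : ∀ a b : L, σL^[nn a + nn b] b = ι (σK^[nn a] (kk b)) := by
    intro a b
    rw [Function.iterate_add_apply, spec b, hLiter]
  have Fa : ∀ a b : L, F a = of (nn a + nn b) (ι' (σK^[nn b] (kk a))) := by
    intro a b
    rw [← hL'iter, hof_step2]
  have Fb : ∀ a b : L, F b = of (nn a + nn b) (ι' (σK^[nn a] (kk b))) := by
    intro a b
    rw [← hL'iter, Nat.add_comm (nn a) (nn b), hof_step2]
  have Fmul : ∀ a b : L, F (a * b) = F a * F b := by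
    intro a b
    have h : σL^[nn a + nn b] (a * b) = ι (σK^[nn b] (kk a) * σK^[nn a] (kk b)) := by
      rw [iterate_map_mul, piece1 a b, piece2 a b, map_mul]
    rw [Fkey (a * b) _ _ h, map_mul, map_mul, Fa a b, Fb a b]
  have Fadd : ∀ a b : L, F (a + b) = F a + F b := by
    intro a b
    have h : σL^[nn a + nn b] (a + b) = ι (σK^[nn b] (kk a) + σK^[nn a] (kk b)) := by
      rw [iterate_map_add, piece1 a b, piece2 a b, map_add]
    rw [Fkey (a + b) _ _ h, map_add, map_add, Fa a b, Fb a b]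
  set fhom : L →+* M :=
    { toFun := F, map_one' := Fone, map_mul' := Fmul, map_zero' := Fzero,
      map_add' := Fadd } with hfhom
  have hfσ : ∀ a : L, fhom (σL a) = σM (fhom a) := by
    intro a
    have h : σL^[nn a] (σL a) = ι (σK (kk a)) := by
      rw [← Function.iterate_succ_apply, Function.iterate_succ_apply', spec a, hL]
    show F (σL a) = σM (F a)
    rw [Fkey (σL a) _ _ h, hF]
    simp only
    rw [σM_of, ← hL']
  have hagree : ∀ x : K, fhom (ι x) = of 0 (ι' x) := by
    intro x
    have h : σL^[0] (ι x) = ι x := rfl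
    exact Fkey (ι x) 0 x h
  have hgσ : ∀ y : L', of 0 (σL' y) = σM (of 0 y) := by
    intro y
    rw [σM_of]
  exact ⟨{ M := M, instField := instM, σM := σM, f := fhom, g := of 0,
           agree := hagree, fσ := hfσ, gσ := hgσ }⟩
end
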